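/- arXiv:2009.00539 — 8 statements merged into one kernel-verified Lean document; each statement's English description precedes it below -/
import Mathlib

section
/- Consider the ORFM. Let (x(t), z(t)) be any solution of the ORFM whose trajectory remains in the state space Ω, and define V(x,z) = Σ_{p,i} m^{pi} Σ_j |dx^{pi}_j/dt| + Σ_p |dz_p/dt| + |dz_E/dt|, where the time derivatives are evaluated as the components of the ORFM vector field at the point (x,z). Then for every choice of positive rates {λ^{pi}_j} and strictly increasing initiation functions G^{pi}, the function t ↦ V(x(t), z(t)) is non-increasing along the solution; i.e., V is a (non-strict) Lyapunov function for the ORFM. -/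
/-- State of an ORFM: codon occupancies `x p i j` (species `p`, strand `i`,
codon `j`, 1-based so that `j` ranges over `1,…,n p i`), translating-pool
occupancies `z p`, and the empty-ribosome pool occupancy `zE`.
(Only the coordinates with `p < M`, `i < s p`, `1 ≤ j ≤ n p i` are meaningful.) -/
structure ORFMState where
  x : ℕ → ℕ → ℕ → ℝ
  z : ℕ → ℝ
  zE : ℝ

/-- The data of an Orthogonal Ribosomal Flow Model (ORFM): `M ≥ 1` ribosome
species, `s p` strands for species `p`, strand `(p,i)` of length `n p i ≥ 1`
with multiplicity `m p i ≥ 1` and positive rates `lam p i 0, …, lam p i (n p i)`,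
an initiation function `G p i` (continuously differentiable on `[0,∞)`,
strictly increasing on `[0,∞)`, vanishing at `0`), and binding rates
`kp p > 0`, `km p > 0`. -/
structure ORFM where
  M : ℕ
  s : ℕ → ℕ
  n : ℕ → ℕ → ℕ
  m : ℕ → ℕ → ℕ
  lam : ℕ → ℕ → ℕ → ℝ
  G : ℕ → ℕ → ℝ → ℝ
  kp : ℕ → ℝ
  km : ℕ → ℝ
  hM : 0 < M
  hn : ∀ p < M, ∀ i < s p, 1 ≤ n p i
  hm : ∀ p < M, ∀ i < s p, 1 ≤ m p i
  hlam : ∀ p < M, ∀ i < s p, ∀ j ≤ n p i, 0 < lam p i j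
  hG_smooth : ∀ p < M, ∀ i < s p, ContDiffOn ℝ 1 (G p i) (Set.Ici 0)
  hG_mono : ∀ p < M, ∀ i < s p, StrictMonoOn (G p i) (Set.Ici 0)
  hG_zero : ∀ p < M, ∀ i < s p, G p i 0 = 0
  hkp : ∀ p < M, 0 < kp p
  hkm : ∀ p < M, 0 < km p

/-- Ribosomal flux from codon `k` to codon `k+1` on strand `(p,i)`
(`k = 0` is initiation from the pool `z p`, `k = n p i` is termination). -/
noncomputable def ORFM.flow (S : ORFM) (st : ORFMState) (p i k : ℕ) : ℝ :=
  if k = 0 then S.lam p i 0 * S.G p i (st.z p) * (1 - st.x p i 1)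
  else if k = S.n p i then S.lam p i k * st.x p i k
  else S.lam p i k * st.x p i k * (1 - st.x p i (k + 1))

/-- Component of the ORFM vector field for codon `j` (1-based) of strand `(p,i)`:
`dx^{pi}_j/dt` = inflow minus outflow. -/
noncomputable def ORFM.fx (S : ORFM) (st : ORFMState) (p i j : ℕ) : ℝ :=
  S.flow st p i (j - 1) - S.flow st p i j

/-- Component of the ORFM vector field for the pool `z p`: `dz_p/dt`. -/
noncomputable def ORFM.fz (S : ORFM) (st : ORFMState) (p : ℕ) : ℝ :=
  S.kp p * st.zE - S.km p * st.z p
    + ∑ i ∈ Finset.range (S.s p), (S.m p i : ℝ) * S.flow st p i (S.n p i)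
    - ∑ i ∈ Finset.range (S.s p), (S.m p i : ℝ) * S.flow st p i 0

/-- Component of the ORFM vector field for the empty pool: `dz_E/dt`. -/
noncomputable def ORFM.fzE (S : ORFM) (st : ORFMState) : ℝ :=
  ∑ p ∈ Finset.range S.M, S.km p * st.z p - ∑ p ∈ Finset.range S.M, S.kp p * st.zE

/-- Membership in the state space `Ω`: all codon occupancies lie in `[0,1]`
and all pools are nonnegative. -/
def ORFM.inOmega (S : ORFM) (st : ORFMState) : Prop :=
  (∀ p < S.M, ∀ i < S.s p, ∀ j, 1 ≤ j → j ≤ S.n p i → st.x p i j ∈ Set.Icc (0:ℝ) 1)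
    ∧ 0 ≤ st.zE ∧ ∀ p < S.M, 0 ≤ st.z p

/-- The total ribosome count `N_r(x,z)`. -/
noncomputable def ORFM.NrOf (S : ORFM) (st : ORFMState) : ℝ :=
  st.zE + ∑ p ∈ Finset.range S.M, st.z p
    + ∑ p ∈ Finset.range S.M, ∑ i ∈ Finset.range (S.s p),
        (S.m p i : ℝ) * ∑ j ∈ Finset.Icc 1 (S.n p i), st.x p i j

/-- A steady state: every component of the ORFM vector field vanishes. -/
def ORFM.isSteady (S : ORFM) (st : ORFMState) : Prop :=
  (∀ p < S.M, ∀ i < S.s p, ∀ j, 1 ≤ j → j ≤ S.n p i → S.fx st p i j = 0)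
    ∧ (∀ p < S.M, S.fz st p = 0) ∧ S.fzE st = 0

/-- A (forward-time) solution of the ORFM: every meaningful coordinate is
differentiable in time with derivative given by the corresponding component
of the ORFM vector field, for all `t ≥ 0`. -/
def ORFM.isSolution (S : ORFM) (traj : ℝ → ORFMState) : Prop :=
  (∀ t, 0 ≤ t → ∀ p < S.M, ∀ i < S.s p, ∀ j, 1 ≤ j → j ≤ S.n p i →
      HasDerivAt (fun τ => (traj τ).x p i j) (S.fx (traj t) p i j) t)
    ∧ (∀ t, 0 ≤ t → ∀ p < S.M,
        HasDerivAt (fun τ => (traj τ).z p) (S.fz (traj t) p) t)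
    ∧ ∀ t, 0 ≤ t → HasDerivAt (fun τ => (traj τ).zE) (S.fzE (traj t)) t

/-- The robust Lyapunov function `V`: the multiplicity-weighted sum of the
absolute values of all the components of the ORFM vector field. -/
noncomputable def ORFM.V (S : ORFM) (st : ORFMState) : ℝ :=
  (∑ p ∈ Finset.range S.M, ∑ i ∈ Finset.range (S.s p),
      (S.m p i : ℝ) * ∑ j ∈ Finset.Icc 1 (S.n p i), |S.fx st p i j|)
    + ∑ p ∈ Finset.range S.M, |S.fz st p| + |S.fzE st|

/-!
`V` is the weighted `ℓ¹` norm of the vector field `f`, and along a solution `ḟ = J f`.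
Every flux of the ORFM moves ribosomes from one compartment to another (conserving them) and
is nondecreasing in the occupancy of its source and nonincreasing in that of its target. The
right derivative of `|f_c|` is `σ_c ḟ_c` for some `σ_c ∈ ∂|·|(f_c)`, so the right derivative
of `V` is a sum over fluxes of `(σ_target - σ_source) (α f_source - β f_target)` with
`α, β ≥ 0`, and every such term is `≤ 0` because `|σ| ≤ 1` and `σ_c f_c = |f_c|`.
A continuous function with nonpositive right derivative is nonincreasing.
-/

open Finset

def IsAbsSubgradient (σ y : ℝ) : Prop := σ * y = |y| ∧ |σ| ≤ 1

lemma IsAbsSubgradient.mul_le {σ y τ : ℝ} (h : IsAbsSubgradient σ y) (hτ : |τ| ≤ 1) :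
    τ * y ≤ σ * y :=
  h.1 ▸ (le_abs_self _).trans (abs_mul τ y ▸ mul_le_of_le_one_left (abs_nonneg y) hτ)

lemma sub_mul_flux_nonpos {σa σb ya yb α β : ℝ} (ha : IsAbsSubgradient σa ya)
    (hb : IsAbsSubgradient σb yb) (hα : 0 ≤ α) (hβ : 0 ≤ β) :
    (σb - σa) * (α * ya - β * yb) ≤ 0 := by
  have h₁ := mul_le_mul_of_nonneg_left (ha.mul_le hb.2) hα
  have h₂ := mul_le_mul_of_nonneg_left (hb.mul_le ha.2) hβ
  linear_combination h₁ + h₂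

theorem sum_range_sub_mul_eq (τ Φ : ℕ → ℝ) (n : ℕ) :
    ∑ k ∈ range (n + 1), (τ (k + 1) - τ k) * Φ k
      = ∑ j ∈ Icc 1 n, τ j * (Φ (j - 1) - Φ j) + (τ (n + 1) * Φ n - τ 0 * Φ 0) := by
  induction n with
  | zero => simp; ring
  | succ n ih =>
    rw [sum_range_succ, ih, sum_Icc_succ_top (by omega), Nat.add_sub_cancel]
    ring

theorem sum_range_sub_mul_flux_nonpos {n : ℕ} {τ y Φ : ℕ → ℝ}
    (hτ : ∀ k ≤ n + 1, IsAbsSubgradient (τ k) (y k))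
    (hΦ : ∀ k ≤ n, ∃ α β, 0 ≤ α ∧ 0 ≤ β ∧ Φ k = α * y k - β * y (k + 1)) :
    ∑ k ∈ range (n + 1), (τ (k + 1) - τ k) * Φ k ≤ 0 := by
  refine sum_nonpos fun k hk => ?_
  have hk : k ≤ n := Nat.lt_succ_iff.1 (mem_range.1 hk)
  obtain ⟨α, β, hα, hβ, hΦk⟩ := hΦ k hk
  rw [hΦk]
  exact sub_mul_flux_nonpos (hτ k (by omega)) (hτ (k + 1) (by omega)) hα hβ

/-- Closes a strand into the cycle `pool → 1 → ⋯ → n → pool`: positions `0` and `n + 1` both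
carry the pool value. -/
def strandExt (n : ℕ) (pool : ℝ) (codon : ℕ → ℝ) (k : ℕ) : ℝ :=
  if 1 ≤ k ∧ k ≤ n then codon k else pool

theorem sum_range_strandExt_eq (n : ℕ) (pool : ℝ) (codon Φ : ℕ → ℝ) :
    ∑ k ∈ range (n + 1), (strandExt n pool codon (k + 1) - strandExt n pool codon k) * Φ k
      = ∑ j ∈ Icc 1 n, codon j * (Φ (j - 1) - Φ j) + pool * (Φ n - Φ 0) := by
  have hpool : ∀ k, ¬(1 ≤ k ∧ k ≤ n) → strandExt n pool codon k = pool :=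
    fun _ h => if_neg h
  rw [sum_range_sub_mul_eq, hpool 0 (by omega), hpool (n + 1) (by omega),
    sum_congr rfl fun j hj => by rw [strandExt, if_pos (mem_Icc.1 hj)]]
  ring

lemma isAbsSubgradient_strandExt {n : ℕ} {σpool pool : ℝ} {σcodon codon : ℕ → ℝ}
    (hpool : IsAbsSubgradient σpool pool)
    (hcodon : ∀ k ∈ Icc 1 n, IsAbsSubgradient (σcodon k) (codon k)) (k : ℕ) :
    IsAbsSubgradient (strandExt n σpool σcodon k) (strandExt n pool codon k) := by
  unfold strandExt
  split_ifs with hk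
  exacts [hcodon k (mem_Icc.2 hk), hpool]

/-- At a zero of `v` the right derivative of `|v|` is `|v'| = sign v' * v'`. -/
noncomputable def absRightSign (v v' : ℝ) : ℝ :=
  if v = 0 then SignType.sign v' else SignType.sign v

lemma abs_sign_le_one (v : ℝ) : |(SignType.sign v : ℝ)| ≤ 1 := by
  rcases lt_trichotomy v 0 with h | h | h <;> simp [h]

lemma isAbsSubgradient_absRightSign (v v' : ℝ) : IsAbsSubgradient (absRightSign v v') v := by
  unfold absRightSign
  split_ifs with hv
  · exact ⟨by simp [hv], abs_sign_le_one v'⟩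
  · exact ⟨sign_mul_self v, abs_sign_le_one v⟩

lemma HasDerivWithinAt.abs_Ici {u : ℝ → ℝ} {u' x : ℝ} (h : HasDerivWithinAt u u' (Set.Ici x) x) :
    HasDerivWithinAt (fun t => |u t|) (absRightSign (u x) u' * u') (Set.Ici x) x := by
  unfold absRightSign
  split_ifs with hux
  · rw [sign_mul_self, hasDerivWithinAt_iff_isLittleO] at *
    refine Asymptotics.IsBigO.trans_isLittleO (Asymptotics.IsBigO.of_bound' ?_) h
    filter_upwards [self_mem_nhdsWithin] with t (ht : x ≤ t)
    have := abs_abs_sub_abs_le_abs_sub (u t) ((t - x) * u')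
    rw [abs_mul, abs_of_nonneg (sub_nonneg.2 ht)] at this
    simpa [hux] using this
  · exact (hasDerivAt_abs hux).comp_hasDerivWithinAt x h

theorem antitoneOn_Ici_of_hasDerivWithinAt_Ici_nonpos {f f' : ℝ → ℝ} {a : ℝ}
    (hf : ContinuousOn f (Set.Ici a))
    (hf' : ∀ x, a ≤ x → HasDerivWithinAt f (f' x) (Set.Ici x) x)
    (hneg : ∀ x, a ≤ x → f' x ≤ 0) :
    AntitoneOn f (Set.Ici a) := fun x hx _ _ hxy =>
  image_le_of_deriv_right_le_deriv_boundary (hf.mono (Set.Icc_subset_Ici_iff hxy |>.2 hx))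
    (fun z hz => hf' z (le_trans hx hz.1)) (B := fun _ => f x) le_rfl continuousOn_const
    (fun _ _ => hasDerivWithinAt_const _ _ _) (fun z hz => hneg z (le_trans hx hz.1))
    ⟨hxy, le_rfl⟩

def ORFM.coordSum (S : ORFM) (a : ℕ → ℕ → ℕ → ℝ) (b : ℕ → ℝ) (c : ℝ) : ℝ :=
  (∑ p ∈ range S.M, ∑ i ∈ range (S.s p), (S.m p i : ℝ) * ∑ j ∈ Icc 1 (S.n p i), a p i j)
    + ∑ p ∈ range S.M, b p + c

theorem ORFM.hasDerivWithinAt_coordSum (S : ORFM) {a : ℝ → ℕ → ℕ → ℕ → ℝ} {b : ℝ → ℕ → ℝ}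
    {c : ℝ → ℝ} {a' : ℕ → ℕ → ℕ → ℝ} {b' : ℕ → ℝ} {c' : ℝ} {s : Set ℝ} {t : ℝ}
    (ha : ∀ p < S.M, ∀ i < S.s p, ∀ j ∈ Icc 1 (S.n p i),
      HasDerivWithinAt (fun τ => a τ p i j) (a' p i j) s t)
    (hb : ∀ p < S.M, HasDerivWithinAt (fun τ => b τ p) (b' p) s t)
    (hc : HasDerivWithinAt c c' s t) :
    HasDerivWithinAt (fun τ => S.coordSum (a τ) (b τ) (c τ)) (S.coordSum a' b' c') s t :=
  ((HasDerivWithinAt.fun_sum fun p hp => HasDerivWithinAt.fun_sum fun i hi =>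
      (HasDerivWithinAt.fun_sum fun j hj =>
        ha p (mem_range.1 hp) i (mem_range.1 hi) j hj).const_mul _).add
    (HasDerivWithinAt.fun_sum fun p hp => hb p (mem_range.1 hp))).add hc

theorem ORFM.continuousOn_coordSum (S : ORFM) {a : ℝ → ℕ → ℕ → ℕ → ℝ} {b : ℝ → ℕ → ℝ}
    {c : ℝ → ℝ} {s : Set ℝ}
    (ha : ∀ p < S.M, ∀ i < S.s p, ∀ j ∈ Icc 1 (S.n p i), ContinuousOn (fun τ => a τ p i j) s)
    (hb : ∀ p < S.M, ContinuousOn (fun τ => b τ p) s) (hc : ContinuousOn c s) :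
    ContinuousOn (fun τ => S.coordSum (a τ) (b τ) (c τ)) s :=
  ((continuousOn_finsetSum _ fun p hp => continuousOn_finsetSum _ fun i hi =>
      continuousOn_const.mul (continuousOn_finsetSum _ fun j hj =>
        ha p (mem_range.1 hp) i (mem_range.1 hi) j hj)).add
    (continuousOn_finsetSum _ fun p hp => hb p (mem_range.1 hp))).add hc

noncomputable def ORFM.flowDeriv (S : ORFM) (st : ORFMState) (p i k : ℕ) : ℝ :=
  if k = 0 then
    S.lam p i 0 * (derivWithin (S.G p i) (Set.Ici 0) (st.z p) * S.fz st p * (1 - st.x p i 1)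
      - S.G p i (st.z p) * S.fx st p i 1)
  else if k = S.n p i then S.lam p i k * S.fx st p i k
  else S.lam p i k * (S.fx st p i k * (1 - st.x p i (k + 1)) - st.x p i k * S.fx st p i (k + 1))

noncomputable def ORFM.fxDeriv (S : ORFM) (st : ORFMState) (p i j : ℕ) : ℝ :=
  S.flowDeriv st p i (j - 1) - S.flowDeriv st p i j

noncomputable def ORFM.fzDeriv (S : ORFM) (st : ORFMState) (p : ℕ) : ℝ :=
  S.kp p * S.fzE st - S.km p * S.fz st p
    + ∑ i ∈ range (S.s p), (S.m p i : ℝ) * S.flowDeriv st p i (S.n p i)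
    - ∑ i ∈ range (S.s p), (S.m p i : ℝ) * S.flowDeriv st p i 0

noncomputable def ORFM.fzEDeriv (S : ORFM) (st : ORFMState) : ℝ :=
  ∑ p ∈ range S.M, S.km p * S.fz st p - ∑ p ∈ range S.M, S.kp p * S.fzE st

theorem ORFM.coordSum_mul_deriv_eq (S : ORFM) (st : ORFMState) (σx : ℕ → ℕ → ℕ → ℝ)
    (σz : ℕ → ℝ) (σE : ℝ) :
    S.coordSum (fun p i j => σx p i j * S.fxDeriv st p i j) (fun p => σz p * S.fzDeriv st p)
        (σE * S.fzEDeriv st)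
      = ∑ p ∈ range S.M,
          ((∑ i ∈ range (S.s p), (S.m p i : ℝ) * ∑ k ∈ range (S.n p i + 1),
              (strandExt (S.n p i) (σz p) (σx p i) (k + 1)
                - strandExt (S.n p i) (σz p) (σx p i) k) * S.flowDeriv st p i k)
            + ((σz p - σE) * (S.kp p * S.fzE st) + (σE - σz p) * (S.km p * S.fz st p))) := by
  rw [coordSum, fzEDeriv, mul_sub, mul_sum, mul_sum, ← sum_sub_distrib, ← sum_add_distrib,
    ← sum_add_distrib]
  refine sum_congr rfl fun p _ => ?_
  simp only [fzDeriv, fxDeriv, sum_range_strandExt_eq, mul_add, mul_sub, mul_sum, sum_add_distrib,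
    sum_sub_distrib]
  ring_nf

lemma ORFM.G_nonneg (S : ORFM) {p i : ℕ} (hp : p < S.M) (hi : i < S.s p) {z : ℝ} (hz : 0 ≤ z) :
    0 ≤ S.G p i z :=
  S.hG_zero p hp i hi ▸ (S.hG_mono p hp i hi).monotoneOn Set.self_mem_Ici hz hz

theorem ORFM.flowDeriv_eq_sub (S : ORFM) {st : ORFMState} (hst : S.inOmega st) {p i k : ℕ}
    (hp : p < S.M) (hi : i < S.s p) (hk : k ≤ S.n p i) :
    ∃ α β : ℝ, 0 ≤ α ∧ 0 ≤ β ∧ S.flowDeriv st p i k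
      = α * strandExt (S.n p i) (S.fz st p) (S.fx st p i) k
        - β * strandExt (S.n p i) (S.fz st p) (S.fx st p i) (k + 1) := by
  have hn := S.hn p hp i hi
  have hlam := (S.hlam p hp i hi k hk).le
  have hx : ∀ j, 1 ≤ j → j ≤ S.n p i → 0 ≤ st.x p i j ∧ st.x p i j ≤ 1 :=
    hst.1 p hp i hi
  have hz := hst.2.2 p hp
  simp only [flowDeriv, strandExt]
  split_ifs <;> try omega
  · subst k
    refine ⟨S.lam p i 0 * derivWithin (S.G p i) (Set.Ici 0) (st.z p) * (1 - st.x p i 1),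
      S.lam p i 0 * S.G p i (st.z p), ?_, ?_, by ring⟩
    · exact mul_nonneg (mul_nonneg hlam ((S.hG_mono p hp i hi).monotoneOn.derivWithin_nonneg))
        (sub_nonneg.2 (hx 1 le_rfl hn).2)
    · exact mul_nonneg hlam (S.G_nonneg hp hi hz)
  · exact ⟨S.lam p i k, 0, hlam, le_rfl, by ring⟩
  · refine ⟨S.lam p i k * (1 - st.x p i (k + 1)), S.lam p i k * st.x p i k,
      mul_nonneg hlam (sub_nonneg.2 (hx (k + 1) (by omega) (by omega)).2),
      mul_nonneg hlam (hx k (by omega) hk).1, by ring⟩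

theorem ORFM.coordSum_mul_deriv_nonpos (S : ORFM) {st : ORFMState} (hst : S.inOmega st)
    {σx : ℕ → ℕ → ℕ → ℝ} {σz : ℕ → ℝ} {σE : ℝ}
    (hσx : ∀ p < S.M, ∀ i < S.s p, ∀ j ∈ Icc 1 (S.n p i),
      IsAbsSubgradient (σx p i j) (S.fx st p i j))
    (hσz : ∀ p < S.M, IsAbsSubgradient (σz p) (S.fz st p))
    (hσE : IsAbsSubgradient σE (S.fzE st)) :
    S.coordSum (fun p i j => σx p i j * S.fxDeriv st p i j) (fun p => σz p * S.fzDeriv st p)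
      (σE * S.fzEDeriv st) ≤ 0 := by
  rw [coordSum_mul_deriv_eq]
  refine sum_nonpos fun p hp => add_nonpos (sum_nonpos fun i hi => ?_) (add_nonpos ?_ ?_)
  all_goals replace hp := mem_range.1 hp
  · replace hi := mem_range.1 hi
    exact mul_nonpos_of_nonneg_of_nonpos (Nat.cast_nonneg _)
      (sum_range_sub_mul_flux_nonpos
        (fun k _ => isAbsSubgradient_strandExt (hσz p hp) (hσx p hp i hi) k)
        (fun k hk => S.flowDeriv_eq_sub hst hp hi hk))
  · simpa using sub_mul_flux_nonpos hσE (hσz p hp) (S.hkp p hp).le le_rfl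
  · simpa using sub_mul_flux_nonpos (hσz p hp) hσE (S.hkm p hp).le le_rfl

/-- `S.V st` is by definition the `coordSum` of `|S.fx st|`, `|S.fz st|` and `|S.fzE st|`, so
`HasDerivWithinAt.abs_Ici` makes this its right derivative along the flow. -/
noncomputable def ORFM.Vdot (S : ORFM) (st : ORFMState) : ℝ :=
  S.coordSum
    (fun p i j => absRightSign (S.fx st p i j) (S.fxDeriv st p i j) * S.fxDeriv st p i j)
    (fun p => absRightSign (S.fz st p) (S.fzDeriv st p) * S.fzDeriv st p)
    (absRightSign (S.fzE st) (S.fzEDeriv st) * S.fzEDeriv st)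

theorem ORFM.Vdot_nonpos (S : ORFM) {st : ORFMState} (hst : S.inOmega st) : S.Vdot st ≤ 0 :=
  S.coordSum_mul_deriv_nonpos hst (fun _ _ _ _ _ _ => isAbsSubgradient_absRightSign _ _)
    (fun _ _ => isAbsSubgradient_absRightSign _ _) (isAbsSubgradient_absRightSign _ _)

section Trajectory

variable {S : ORFM} {traj : ℝ → ORFMState}

theorem ORFM.isSolution.hasDerivWithinAt_G (hsol : S.isSolution traj)
    (hΩ : ∀ t, 0 ≤ t → S.inOmega (traj t)) {t : ℝ} (ht : 0 ≤ t) {p i : ℕ} (hp : p < S.M)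
    (hi : i < S.s p) :
    HasDerivWithinAt (fun τ => S.G p i ((traj τ).z p))
      (derivWithin (S.G p i) (Set.Ici 0) ((traj t).z p) * S.fz (traj t) p) (Set.Ici 0) t :=
  ((S.hG_smooth p hp i hi).differentiableOn one_ne_zero _
      ((hΩ t ht).2.2 p hp)).hasDerivWithinAt.comp t
    (hsol.2.1 t ht p hp).hasDerivWithinAt fun τ hτ => (hΩ τ hτ).2.2 p hp

theorem ORFM.isSolution.hasDerivWithinAt_flow (hsol : S.isSolution traj)
    (hΩ : ∀ t, 0 ≤ t → S.inOmega (traj t)) {t : ℝ} (ht : 0 ≤ t) {p i k : ℕ} (hp : p < S.M)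
    (hi : i < S.s p) (hk : k ≤ S.n p i) :
    HasDerivWithinAt (fun τ => S.flow (traj τ) p i k) (S.flowDeriv (traj t) p i k)
      (Set.Ici 0) t := by
  have hx : ∀ j, 1 ≤ j → j ≤ S.n p i → HasDerivWithinAt (fun τ => (traj τ).x p i j)
      (S.fx (traj t) p i j) (Set.Ici 0) t :=
    fun j h₁ h₂ => (hsol.1 t ht p hp i hi j h₁ h₂).hasDerivWithinAt
  have hn := S.hn p hp i hi
  unfold ORFM.flow ORFM.flowDeriv
  split_ifs with hk₀ hkn
  · subst k
    exact (((hsol.hasDerivWithinAt_G hΩ ht hp hi).const_mul (S.lam p i 0)).fun_mul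
      ((hx 1 le_rfl hn).const_sub 1)).congr_deriv (by ring)
  · exact (hx k (by omega) hk).const_mul _
  · exact (((hx k (by omega) hk).const_mul (S.lam p i k)).fun_mul
      ((hx (k + 1) (by omega) (by omega)).const_sub 1)).congr_deriv (by ring)

theorem ORFM.isSolution.hasDerivWithinAt_fx (hsol : S.isSolution traj)
    (hΩ : ∀ t, 0 ≤ t → S.inOmega (traj t)) {t : ℝ} (ht : 0 ≤ t) {p i j : ℕ} (hp : p < S.M)
    (hi : i < S.s p) (hj : j ∈ Icc 1 (S.n p i)) :
    HasDerivWithinAt (fun τ => S.fx (traj τ) p i j) (S.fxDeriv (traj t) p i j) (Set.Ici 0) t :=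
  (hsol.hasDerivWithinAt_flow hΩ ht hp hi ((Nat.sub_le j 1).trans (mem_Icc.1 hj).2)).sub
    (hsol.hasDerivWithinAt_flow hΩ ht hp hi (mem_Icc.1 hj).2)

theorem ORFM.isSolution.hasDerivWithinAt_fz (hsol : S.isSolution traj)
    (hΩ : ∀ t, 0 ≤ t → S.inOmega (traj t)) {t : ℝ} (ht : 0 ≤ t) {p : ℕ} (hp : p < S.M) :
    HasDerivWithinAt (fun τ => S.fz (traj τ) p) (S.fzDeriv (traj t) p) (Set.Ici 0) t :=
  (((((hsol.2.2 t ht).hasDerivWithinAt.const_mul _).sub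
      ((hsol.2.1 t ht p hp).hasDerivWithinAt.const_mul _)).add
    (HasDerivWithinAt.fun_sum fun _ hi =>
      (hsol.hasDerivWithinAt_flow hΩ ht hp (mem_range.1 hi) le_rfl).const_mul _)).sub
    (HasDerivWithinAt.fun_sum fun _ hi =>
      (hsol.hasDerivWithinAt_flow hΩ ht hp (mem_range.1 hi) (Nat.zero_le _)).const_mul _))

theorem ORFM.isSolution.hasDerivWithinAt_fzE (hsol : S.isSolution traj) {t : ℝ} (ht : 0 ≤ t) :
    HasDerivWithinAt (fun τ => S.fzE (traj τ)) (S.fzEDeriv (traj t)) (Set.Ici 0) t :=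
  (HasDerivWithinAt.fun_sum fun p hp =>
      (hsol.2.1 t ht p (mem_range.1 hp)).hasDerivWithinAt.const_mul _).sub
    (HasDerivWithinAt.fun_sum fun _ _ => (hsol.2.2 t ht).hasDerivWithinAt.const_mul _)

theorem ORFM.isSolution.hasDerivWithinAt_V (hsol : S.isSolution traj)
    (hΩ : ∀ t, 0 ≤ t → S.inOmega (traj t)) {t : ℝ} (ht : 0 ≤ t) :
    HasDerivWithinAt (fun τ => S.V (traj τ)) (S.Vdot (traj t)) (Set.Ici t) t :=
  have hsub : Set.Ici t ⊆ Set.Ici 0 := Set.Ici_subset_Ici.2 ht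
  S.hasDerivWithinAt_coordSum
    (fun _ hp _ hi _ hj => ((hsol.hasDerivWithinAt_fx hΩ ht hp hi hj).mono hsub).abs_Ici)
    (fun _ hp => ((hsol.hasDerivWithinAt_fz hΩ ht hp).mono hsub).abs_Ici)
    ((hsol.hasDerivWithinAt_fzE ht).mono hsub).abs_Ici

theorem ORFM.isSolution.continuousOn_V (hsol : S.isSolution traj)
    (hΩ : ∀ t, 0 ≤ t → S.inOmega (traj t)) :
    ContinuousOn (fun τ => S.V (traj τ)) (Set.Ici 0) :=
  S.continuousOn_coordSum
    (fun _ hp _ hi _ hj _ ht =>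
      (hsol.hasDerivWithinAt_fx hΩ ht hp hi hj).continuousWithinAt.abs)
    (fun _ hp _ ht => (hsol.hasDerivWithinAt_fz hΩ ht hp).continuousWithinAt.abs)
    (fun _ ht => (hsol.hasDerivWithinAt_fzE ht).continuousWithinAt.abs)

end Trajectory

/-- For every ORFM (i.e., every choice of positive rates and
strictly increasing initiation functions), along any solution whose trajectory
remains in the state space `Ω`, the function `t ↦ V(x(t),z(t))` is
non-increasing; that is, `V` is a (non-strict) Lyapunov function. -/
theorem orfm_V_is_lyapunov (S : ORFM) (traj : ℝ → ORFMState)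
    (hsol : S.isSolution traj)
    (hΩ : ∀ t, 0 ≤ t → S.inOmega (traj t)) :
    ∀ t₁ t₂, 0 ≤ t₁ → t₁ ≤ t₂ → S.V (traj t₂) ≤ S.V (traj t₁) := by
  intro t₁ t₂ ht₁ ht₁₂
  have hanti : AntitoneOn (fun τ => S.V (traj τ)) (Set.Ici 0) :=
    antitoneOn_Ici_of_hasDerivWithinAt_Ici_nonpos (hsol.continuousOn_V hΩ)
      (fun _ ht => hsol.hasDerivWithinAt_V hΩ ht) (fun t ht => S.Vdot_nonpos (hΩ t ht))
  exact hanti ht₁ (ht₁.trans ht₁₂) ht₁₂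
end

section
/- Consider the ORFM. For every fixed total number of ribosomes N_r > 0, there exists exactly one steady state (x_e, z_e) of the ORFM (a point of Ω at which every component of the ORFM vector field vanishes) satisfying N_r(x_e, z_e) = N_r; moreover this steady state is strictly positive, i.e., x_e has every codon occupancy in the open interval (0,1), z_{e,E} > 0, and z_{e,p} > 0 for every p. -/
/-- Two states agree on all the meaningful coordinates of the ORFM `S`. -/
def ORFM.stateEq (S : ORFM) (a b : ORFMState) : Prop :=
  (∀ p < S.M, ∀ i < S.s p, ∀ j, 1 ≤ j → j ≤ S.n p i → a.x p i j = b.x p i j)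
    ∧ (∀ p < S.M, a.z p = b.z p) ∧ a.zE = b.zE

/-!
At a steady state all fluxes along a strand equal a common value `R`. Reading the strand backwards
from its last codon, the balance equations determine each occupancy as an explicit increasing
function of `R` (`RFM.occ`), and the initiation term `G (z_p)` is the next term of this chain.
Along the chain each such function is a continuous increasing bijection of its natural domain onto
`[0, ∞)` (by induction and the intermediate value theorem), so `R` is a continuous increasing
function of `z_p`. The pool equations force `z_p = (k⁺_p / k⁻_p) z_E`, so a steady state is
determined by `z_E`, and its ribosome count is a continuous strictly increasing function of `z_E`
that vanishes at `0` and is at least `z_E`. Existence and uniqueness for each `N_r > 0` follow.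
-/

open Set Filter

theorem StrictMonoOn.continuousOn_Ici_of_ordConnected_image {α β : Type*}
    [LinearOrder α] [TopologicalSpace α] [OrderTopology α] [NoMaxOrder α]
    [LinearOrder β] [TopologicalSpace β] [OrderTopology β]
    {f : α → β} {a : α} (hf : StrictMonoOn f (Ici a)) (himg : (f '' Ici a).OrdConnected) :
    ContinuousOn f (Ici a) := by
  intro x (hx : a ≤ x)
  have hright : ContinuousWithinAt f (Ici x) x := by
    refine hf.continuousWithinAt_right_of_exists_between
      (mem_of_superset self_mem_nhdsWithin (Ici_subset_Ici.2 hx)) fun b hb => ?_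
    obtain ⟨x', hx'⟩ := exists_gt x
    have hfx' : f x < f x' := hf hx (hx.trans hx'.le) hx'
    obtain ⟨c, hc, hfc⟩ : min b (f x') ∈ f '' Ici a :=
      himg.out (mem_image_of_mem f hx) (mem_image_of_mem f (hx.trans hx'.le))
        ⟨le_min hb.le hfx'.le, min_le_right _ _⟩
    exact ⟨c, hc, hfc ▸ lt_min hb hfx', hfc ▸ min_le_left _ _⟩
  rcases hx.eq_or_lt with rfl | hax
  · exact hright
  refine ContinuousAt.continuousWithinAt (continuousAt_iff_continuous_left_right.2 ⟨?_, hright⟩)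
  refine hf.continuousWithinAt_left_of_exists_between
    (mem_nhdsWithin_of_mem_nhds (Ici_mem_nhds hax)) fun b hb => ?_
  have hfa : f a < f x := hf self_mem_Ici hx hax
  obtain ⟨c, hc, hfc⟩ : max b (f a) ∈ f '' Ici a :=
    himg.out (mem_image_of_mem f self_mem_Ici) (mem_image_of_mem f hx)
      ⟨le_max_right _ _, max_le hb.le hfa.le⟩
  exact ⟨c, hc, hfc ▸ le_max_left _ _, hfc ▸ max_lt hb hfa⟩

namespace RFM

/-- Steady-state equations of a ribosome flow model carrying flux `R`, with occupancies `w` and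
rates `μ` indexed from the end of the strand. -/
def IsBalanced (μ : ℕ → ℝ) (n : ℕ) (w : ℕ → ℝ) (R : ℝ) : Prop :=
  μ 0 * w 0 = R ∧ ∀ e < n, μ (e + 1) * w (e + 1) * (1 - w e) = R

/-- The solution of `IsBalanced μ n · R`, computed from the end of the chain. -/
noncomputable def occ (μ : ℕ → ℝ) : ℕ → ℝ → ℝ
  | 0, R => R / μ 0
  | d + 1, R => R / (μ (d + 1) * (1 - occ μ d R))

def occDomain (μ : ℕ → ℝ) (d : ℕ) : Set ℝ := {R | 0 ≤ R ∧ ∀ e < d, occ μ e R < 1}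

variable {μ : ℕ → ℝ}

@[simp]
theorem occ_zero_left (R : ℝ) : occ μ 0 R = R / μ 0 := rfl

theorem occ_succ (d : ℕ) (R : ℝ) : occ μ (d + 1) R = R / (μ (d + 1) * (1 - occ μ d R)) := rfl

@[simp]
theorem occ_zero_right (d : ℕ) : occ μ d 0 = 0 := by
  cases d <;> simp [occ_succ]

theorem occDomain_zero : occDomain μ 0 = Ici 0 := by
  simp [occDomain, Ici]

theorem occDomain_succ (d : ℕ) :
    occDomain μ (d + 1) = {R | R ∈ occDomain μ d ∧ occ μ d R < 1} := by
  ext R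
  simp only [occDomain, Nat.forall_lt_succ_right, mem_ofPred_eq, and_assoc]

theorem occDomain_antitone : Antitone (occDomain μ) :=
  fun _ _ hdd' _ hR => ⟨hR.1, fun e he => hR.2 e (he.trans_le hdd')⟩

theorem zero_mem_occDomain (d : ℕ) : (0 : ℝ) ∈ occDomain μ d :=
  ⟨le_rfl, fun e _ => by simp⟩

theorem IsBalanced.ne_one {n : ℕ} {w : ℕ → ℝ} {R : ℝ} (hw : IsBalanced μ n w R) {e : ℕ}
    (he : e < n) (hwe : w e = occ μ e R) : w e ≠ 1 := by
  intro h1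
  have hR : R = 0 := by rw [← hw.2 e he, h1]; ring
  rw [hR, occ_zero_right, h1] at hwe
  exact one_ne_zero hwe

section

variable (hμ : ∀ e, 0 < μ e)
include hμ

theorem occ_nonneg {d : ℕ} {R : ℝ} (hR : R ∈ occDomain μ d) : 0 ≤ occ μ d R := by
  cases d with
  | zero => exact div_nonneg hR.1 (hμ 0).le
  | succ d =>
    have := hR.2 d d.lt_succ_self
    exact div_nonneg hR.1 (mul_pos (hμ _) (by linarith)).le

theorem occ_pos {d : ℕ} {R : ℝ} (hR : R ∈ occDomain μ d) (hR0 : 0 < R) : 0 < occ μ d R := by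
  cases d with
  | zero => exact div_pos hR0 (hμ 0)
  | succ d =>
    have := hR.2 d d.lt_succ_self
    exact div_pos hR0 (mul_pos (hμ _) (by linarith))

theorem strictMonoOn_occ (d : ℕ) : StrictMonoOn (occ μ d) (occDomain μ d) := by
  induction d with
  | zero => exact fun R _ R' _ h => div_lt_div_of_pos_right h (hμ 0)
  | succ d ih =>
    rw [occDomain_succ]
    rintro R ⟨hR, -⟩ R' ⟨hR', hR'1⟩ hRR'
    have hlt := ih hR hR' hRR'
    have hden : 0 < μ (d + 1) * (1 - occ μ d R') := mul_pos (hμ _) (by linarith)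
    calc occ μ (d + 1) R ≤ R / (μ (d + 1) * (1 - occ μ d R')) := by
          rw [occ_succ]; gcongr
          · exact hR.1
          · exact (hμ _).le
      _ < occ μ (d + 1) R' := div_lt_div_of_pos_right hRR' hden

theorem ordConnected_occDomain (d : ℕ) : (occDomain μ d).OrdConnected := by
  induction d with
  | zero => rw [occDomain_zero]; exact ordConnected_Ici
  | succ d ih =>
    rw [occDomain_succ]
    refine ⟨fun R hR R' hR' R'' hR'' => ?_⟩
    have hR''d : R'' ∈ occDomain μ d := ih.out hR.1 hR'.1 hR''
    exact ⟨hR''d, ((strictMonoOn_occ hμ d).monotoneOn hR''d hR'.1 hR''.2).trans_lt hR'.2⟩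

theorem continuousOn_occ (d : ℕ) : ContinuousOn (occ μ d) (occDomain μ d) := by
  induction d with
  | zero => exact continuousOn_id.div_const _
  | succ d ih =>
    refine continuousOn_id.div (continuousOn_const.mul (continuousOn_const.sub
      (ih.mono (occDomain_antitone d.le_succ)))) fun R hR => ?_
    have := hR.2 d d.lt_succ_self
    exact (mul_pos (hμ _) (by linarith)).ne'

theorem surjOn_occ (d : ℕ) : SurjOn (occ μ d) (occDomain μ d) (Ici 0) := by
  induction d with
  | zero =>
    intro t (ht : 0 ≤ t)
    exact ⟨t * μ 0, by simpa [occDomain_zero] using mul_nonneg ht (hμ 0).le,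
      mul_div_cancel_right₀ t (hμ 0).ne'⟩
  | succ d ih =>
    intro t (ht : 0 ≤ t)
    -- Pushing `occ μ d` close to `1` while keeping the flux above a fixed positive level
    -- makes `occ μ (d + 1)` arbitrarily large; the intermediate value theorem does the rest.
    obtain ⟨Rh, hRh, hRh_half⟩ := ih (show (1 / 2 : ℝ) ∈ Ici 0 by norm_num)
    have hRh0 : 0 < Rh := hRh.1.lt_of_ne (by rintro rfl; norm_num at hRh_half)
    set ε := Rh / (μ (d + 1) * t + 2 * Rh) with hε
    have hden : 0 < μ (d + 1) * t + 2 * Rh := by have := hμ (d + 1); positivity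
    have hε_mul : ε * (μ (d + 1) * t + 2 * Rh) = Rh := div_mul_cancel₀ _ hden.ne'
    have hε0 : 0 < ε := div_pos hRh0 hden
    have hε_half : ε ≤ 1 / 2 := by
      rw [hε, div_le_iff₀ hden]; nlinarith [hμ (d + 1)]
    obtain ⟨R₀, hR₀, hR₀ε⟩ := ih (show 1 - ε ∈ Ici 0 by simp only [mem_Ici]; linarith)
    have hR₀' : R₀ ∈ occDomain μ (d + 1) := by
      rw [occDomain_succ]; exact ⟨hR₀, by linarith⟩
    have hRhR₀ : Rh ≤ R₀ :=
      ((strictMonoOn_occ hμ d).le_iff_le hRh hR₀).1 (by rw [hRh_half, hR₀ε]; linarith)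
    have htR₀ : t ≤ occ μ (d + 1) R₀ := by
      rw [occ_succ, hR₀ε, sub_sub_cancel, le_div_iff₀ (mul_pos (hμ _) hε0)]
      nlinarith
    have := ordConnected_occDomain hμ (d + 1)
    simpa using (continuousOn_occ hμ (d + 1)).surjOn_Icc (zero_mem_occDomain _) hR₀'
      (show t ∈ Icc (occ μ (d + 1) 0) (occ μ (d + 1) R₀) by simpa using ⟨ht, htR₀⟩)

theorem isBalanced_of_eq_occ {n : ℕ} {w : ℕ → ℝ} {R : ℝ} (hR : R ∈ occDomain μ n)
    (hw : ∀ e ≤ n, w e = occ μ e R) : IsBalanced μ n w R := by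
  refine ⟨?_, fun e he => ?_⟩
  · rw [hw 0 n.zero_le, occ_zero_left, mul_div_cancel₀ _ (hμ 0).ne']
  · have h1 : occ μ e R < 1 := hR.2 e he
    rw [hw _ he.le, hw _ he, occ_succ]
    field_simp [(hμ (e + 1)).ne', (sub_pos.2 h1).ne']

theorem eq_occ_of_isBalanced {n : ℕ} {w : ℕ → ℝ} {R : ℝ} (hw : IsBalanced μ n w R) :
    ∀ e ≤ n, w e = occ μ e R := by
  intro e
  induction e with
  | zero => intro _; rw [occ_zero_left, eq_div_iff (hμ 0).ne', mul_comm]; exact hw.1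
  | succ e ih =>
    intro he
    have hwe := ih (by omega)
    have hne := hw.ne_one he hwe
    rw [occ_succ, ← hwe, eq_div_iff (mul_ne_zero (hμ _).ne' (sub_ne_zero.2 hne.symm))]
    linear_combination hw.2 e he

theorem mem_occDomain_of_isBalanced {n : ℕ} {w : ℕ → ℝ} {R : ℝ} (hw : IsBalanced μ n w R)
    (hR : 0 ≤ R) (hw1 : ∀ e < n, w e ≤ 1) : R ∈ occDomain μ n := by
  refine ⟨hR, fun e he => ?_⟩
  have hwe := eq_occ_of_isBalanced hμ hw e he.le
  exact hwe ▸ (hw1 e he).lt_of_ne (hw.ne_one he hwe)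

end

noncomputable def flux (μ : ℕ → ℝ) (d : ℕ) : ℝ → ℝ :=
  Function.invFunOn (occ μ d) (occDomain μ d)

section

variable (hμ : ∀ e, 0 < μ e) {d : ℕ}
include hμ

theorem flux_mem_occDomain {t : ℝ} (ht : 0 ≤ t) : flux μ d t ∈ occDomain μ d :=
  Function.invFunOn_mem (surjOn_occ hμ d ht)

theorem occ_flux {t : ℝ} (ht : 0 ≤ t) : occ μ d (flux μ d t) = t :=
  Function.invFunOn_eq (surjOn_occ hμ d ht)

theorem flux_occ {R : ℝ} (hR : R ∈ occDomain μ d) : flux μ d (occ μ d R) = R :=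
  (strictMonoOn_occ hμ d).injOn.leftInvOn_invFunOn hR

theorem flux_zero : flux μ d 0 = 0 := by
  simpa using flux_occ hμ (zero_mem_occDomain d)

theorem flux_pos {t : ℝ} (ht : 0 < t) : 0 < flux μ d t := by
  refine (flux_mem_occDomain hμ ht.le).1.lt_of_ne fun h => ?_
  have := occ_flux hμ (d := d) ht.le
  rw [← h, occ_zero_right] at this
  exact ht.ne this

theorem strictMonoOn_flux : StrictMonoOn (flux μ d) (Ici 0) := fun t ht t' ht' htt' => by
  rwa [← (strictMonoOn_occ hμ d).lt_iff_lt (flux_mem_occDomain hμ ht)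
    (flux_mem_occDomain hμ ht'), occ_flux hμ ht, occ_flux hμ ht']

theorem image_flux : flux μ d '' Ici 0 = occDomain μ d := by
  refine Subset.antisymm (image_subset_iff.2 fun _ ht => flux_mem_occDomain hμ ht) fun R hR => ?_
  exact ⟨occ μ d R, occ_nonneg hμ hR, flux_occ hμ hR⟩

theorem continuousOn_flux : ContinuousOn (flux μ d) (Ici 0) :=
  (strictMonoOn_flux hμ).continuousOn_Ici_of_ordConnected_image
    (image_flux hμ ▸ ordConnected_occDomain hμ d)

end

end RFM

namespace ORFM

variable (S : ORFM)

def revRate (p i e : ℕ) : ℝ := S.lam p i (S.n p i - e)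

/-- The occupancies of strand `(p,i)` read from its last codon backwards (`e = 0` is codon
`n p i`), with the initiation term `G p i (z p)` playing the role of codon `0`. In these
coordinates the steady-state equations are those of `RFM.IsBalanced` for the rates `revRate`. -/
noncomputable def strandOcc (st : ORFMState) (p i e : ℕ) : ℝ :=
  if e = S.n p i then S.G p i (st.z p) else st.x p i (S.n p i - e)

noncomputable def strandFlux (p i : ℕ) (z : ℝ) : ℝ :=
  RFM.flux (S.revRate p i) (S.n p i) (S.G p i z)

noncomputable def steadyState (zE : ℝ) : ORFMState where
  x p i j := RFM.occ (S.revRate p i) (S.n p i - j) (S.strandFlux p i (S.kp p / S.km p * zE))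
  z p := S.kp p / S.km p * zE
  zE := zE

variable {S} {p i : ℕ}

theorem revRate_pos (hp : p < S.M) (hi : i < S.s p) (e : ℕ) : 0 < S.revRate p i e :=
  S.hlam p hp i hi _ (Nat.sub_le _ _)

theorem flow_n (st : ORFMState) (hp : p < S.M) (hi : i < S.s p) :
    S.flow st p i (S.n p i) = S.revRate p i 0 * S.strandOcc st p i 0 := by
  have hn := S.hn p hp i hi
  rw [flow, if_neg (by omega), if_pos rfl, strandOcc, if_neg (by omega), revRate, Nat.sub_zero]

theorem flow_n_sub_succ (st : ORFMState) {e : ℕ} (he : e < S.n p i) :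
    S.flow st p i (S.n p i - (e + 1)) =
      S.revRate p i (e + 1) * S.strandOcc st p i (e + 1) * (1 - S.strandOcc st p i e) := by
  rw [strandOcc, strandOcc, if_neg he.ne, revRate]
  rcases (Nat.succ_le_of_lt he).lt_or_eq with h | h
  · rw [flow, if_neg (by omega), if_neg (by omega), if_neg h.ne,
      show S.n p i - (e + 1) + 1 = S.n p i - e by omega]
  · rw [flow, if_pos (by omega), if_pos h, ← h, Nat.sub_self, show e + 1 - e = 1 by omega]

theorem flow_eq_flow_zero {st : ORFMState}
    (hfx : ∀ j, 1 ≤ j → j ≤ S.n p i → S.fx st p i j = 0) :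
    ∀ k ≤ S.n p i, S.flow st p i k = S.flow st p i 0 := by
  intro k
  induction k with
  | zero => intro _; rfl
  | succ k ih =>
    intro hk
    have h := hfx (k + 1) (by omega) hk
    rw [fx, Nat.add_sub_cancel] at h
    linarith [ih (by omega)]

theorem isBalanced_strandOcc {st : ORFMState} (hp : p < S.M) (hi : i < S.s p)
    (hfx : ∀ j, 1 ≤ j → j ≤ S.n p i → S.fx st p i j = 0) :
    RFM.IsBalanced (S.revRate p i) (S.n p i) (S.strandOcc st p i) (S.flow st p i (S.n p i)) := by
  refine ⟨(flow_n st hp hi).symm, fun e he => ?_⟩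
  rw [← flow_n_sub_succ st he, flow_eq_flow_zero hfx _ (Nat.sub_le _ _),
    flow_eq_flow_zero hfx _ le_rfl]

theorem flow_eq_of_isBalanced {st : ORFMState} {R : ℝ} (hp : p < S.M) (hi : i < S.s p)
    (hb : RFM.IsBalanced (S.revRate p i) (S.n p i) (S.strandOcc st p i) R) :
    ∀ k ≤ S.n p i, S.flow st p i k = R := by
  intro k hk
  obtain ⟨e, he, rfl⟩ : ∃ e ≤ S.n p i, k = S.n p i - e := ⟨S.n p i - k, by omega, by omega⟩
  rcases e with _ | e
  · rw [Nat.sub_zero, flow_n st hp hi, hb.1]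
  · rw [flow_n_sub_succ st he, hb.2 e he]

theorem NrOf_lt_NrOf {a b : ORFMState}
    (hx : ∀ p < S.M, ∀ i < S.s p, ∀ j, 1 ≤ j → j ≤ S.n p i → a.x p i j ≤ b.x p i j)
    (hz : ∀ p < S.M, a.z p ≤ b.z p) (hzE : a.zE < b.zE) : S.NrOf a < S.NrOf b := by
  unfold NrOf
  have hz_sum : ∑ p ∈ Finset.range S.M, a.z p ≤ ∑ p ∈ Finset.range S.M, b.z p :=
    Finset.sum_le_sum fun p hp => hz p (Finset.mem_range.1 hp)
  have hx_sum : ∑ p ∈ Finset.range S.M, ∑ i ∈ Finset.range (S.s p),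
        (S.m p i : ℝ) * ∑ j ∈ Finset.Icc 1 (S.n p i), a.x p i j ≤
      ∑ p ∈ Finset.range S.M, ∑ i ∈ Finset.range (S.s p),
        (S.m p i : ℝ) * ∑ j ∈ Finset.Icc 1 (S.n p i), b.x p i j := by
    gcongr with p hp i hi j hj
    exact hx p (Finset.mem_range.1 hp) i (Finset.mem_range.1 hi) j
      (Finset.mem_Icc.1 hj).1 (Finset.mem_Icc.1 hj).2
  linarith

theorem NrOf_congr {a b : ORFMState} (h : S.stateEq a b) : S.NrOf a = S.NrOf b := by
  unfold NrOf
  rw [h.2.2, Finset.sum_congr rfl fun p hp => h.2.1 p (Finset.mem_range.1 hp)]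
  refine congrArg _ (Finset.sum_congr rfl fun p hp => Finset.sum_congr rfl fun i hi => ?_)
  refine congrArg _ (Finset.sum_congr rfl fun j hj => ?_)
  exact h.1 p (Finset.mem_range.1 hp) i (Finset.mem_range.1 hi) j
    (Finset.mem_Icc.1 hj).1 (Finset.mem_Icc.1 hj).2

theorem zE_le_NrOf {st : ORFMState} (hΩ : S.inOmega st) : st.zE ≤ S.NrOf st := by
  unfold NrOf
  have hz : 0 ≤ ∑ p ∈ Finset.range S.M, st.z p :=
    Finset.sum_nonneg fun p hp => hΩ.2.2 p (Finset.mem_range.1 hp)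
  have hx : 0 ≤ ∑ p ∈ Finset.range S.M, ∑ i ∈ Finset.range (S.s p),
      (S.m p i : ℝ) * ∑ j ∈ Finset.Icc 1 (S.n p i), st.x p i j :=
    Finset.sum_nonneg fun p hp => Finset.sum_nonneg fun i hi => mul_nonneg (Nat.cast_nonneg _)
      (Finset.sum_nonneg fun j hj => (hΩ.1 p (Finset.mem_range.1 hp) i (Finset.mem_range.1 hi)
        j (Finset.mem_Icc.1 hj).1 (Finset.mem_Icc.1 hj).2).1)
  linarith

theorem continuousOn_NrOf {st : ℝ → ORFMState} {T : Set ℝ}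
    (hx : ∀ p < S.M, ∀ i < S.s p, ∀ j, ContinuousOn (fun t => (st t).x p i j) T)
    (hz : ∀ p < S.M, ContinuousOn (fun t => (st t).z p) T)
    (hzE : ContinuousOn (fun t => (st t).zE) T) : ContinuousOn (fun t => S.NrOf (st t)) T :=
  (hzE.add (continuousOn_finsetSum _ fun p hp => hz p (Finset.mem_range.1 hp))).add
    (continuousOn_finsetSum _ fun p hp => continuousOn_finsetSum _ fun i hi =>
      continuousOn_const.mul (continuousOn_finsetSum _ fun j _ =>
        hx p (Finset.mem_range.1 hp) i (Finset.mem_range.1 hi) j))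

theorem G_nonneg_s1 (hp : p < S.M) (hi : i < S.s p) {z : ℝ} (hz : 0 ≤ z) : 0 ≤ S.G p i z :=
  S.hG_zero p hp i hi ▸ (S.hG_mono p hp i hi).monotoneOn self_mem_Ici hz hz

theorem G_pos (hp : p < S.M) (hi : i < S.s p) {z : ℝ} (hz : 0 < z) : 0 < S.G p i z :=
  S.hG_zero p hp i hi ▸ S.hG_mono p hp i hi self_mem_Ici hz.le hz

section strandFlux

variable (hp : p < S.M) (hi : i < S.s p)
include hp hi

theorem strandFlux_mem_occDomain {z : ℝ} (hz : 0 ≤ z) :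
    S.strandFlux p i z ∈ RFM.occDomain (S.revRate p i) (S.n p i) :=
  RFM.flux_mem_occDomain (revRate_pos hp hi) (G_nonneg_s1 hp hi hz)

theorem occ_strandFlux {z : ℝ} (hz : 0 ≤ z) :
    RFM.occ (S.revRate p i) (S.n p i) (S.strandFlux p i z) = S.G p i z :=
  RFM.occ_flux (revRate_pos hp hi) (G_nonneg_s1 hp hi hz)

theorem strandFlux_zero : S.strandFlux p i 0 = 0 := by
  rw [strandFlux, S.hG_zero p hp i hi, RFM.flux_zero (revRate_pos hp hi)]

theorem strandFlux_pos {z : ℝ} (hz : 0 < z) : 0 < S.strandFlux p i z :=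
  RFM.flux_pos (revRate_pos hp hi) (G_pos hp hi hz)

theorem monotoneOn_strandFlux : MonotoneOn (S.strandFlux p i) (Ici 0) :=
  (RFM.strictMonoOn_flux (revRate_pos hp hi)).monotoneOn.comp
    (S.hG_mono p hp i hi).monotoneOn fun _ hz => G_nonneg_s1 hp hi hz

theorem continuousOn_strandFlux : ContinuousOn (S.strandFlux p i) (Ici 0) :=
  (RFM.continuousOn_flux (revRate_pos hp hi)).comp (S.hG_smooth p hp i hi).continuousOn
    fun _ hz => G_nonneg_s1 hp hi hz

end strandFlux

theorem kp_div_km_pos (hp : p < S.M) : 0 < S.kp p / S.km p :=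
  div_pos (S.hkp p hp) (S.hkm p hp)

section steadyState

variable {zE : ℝ}

theorem strandOcc_steadyState (hp : p < S.M) (hi : i < S.s p) (hzE : 0 ≤ zE) :
    ∀ e ≤ S.n p i, S.strandOcc (S.steadyState zE) p i e =
      RFM.occ (S.revRate p i) e (S.strandFlux p i (S.kp p / S.km p * zE)) := by
  intro e he
  rw [strandOcc]
  split_ifs with h
  · subst h
    exact (occ_strandFlux hp hi (mul_nonneg (kp_div_km_pos hp).le hzE)).symm
  · simp only [steadyState, Nat.sub_sub_self he]

theorem flow_steadyState (hp : p < S.M) (hi : i < S.s p) (hzE : 0 ≤ zE) :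
    ∀ k ≤ S.n p i, S.flow (S.steadyState zE) p i k = S.strandFlux p i (S.kp p / S.km p * zE) :=
  flow_eq_of_isBalanced hp hi <| RFM.isBalanced_of_eq_occ (revRate_pos hp hi)
    (strandFlux_mem_occDomain hp hi (mul_nonneg (kp_div_km_pos hp).le hzE))
    (strandOcc_steadyState hp hi hzE)

theorem steadyState_x_mem_Ioo (hzE : 0 < zE) (hp : p < S.M) (hi : i < S.s p) {j : ℕ}
    (hj1 : 1 ≤ j) (hj2 : j ≤ S.n p i) : (S.steadyState zE).x p i j ∈ Ioo 0 1 := by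
  have hR := strandFlux_mem_occDomain hp hi (mul_pos (kp_div_km_pos hp) hzE).le
  exact ⟨RFM.occ_pos (revRate_pos hp hi) (RFM.occDomain_antitone (Nat.sub_le _ _) hR)
      (strandFlux_pos hp hi (mul_pos (kp_div_km_pos hp) hzE)),
    hR.2 _ (by omega)⟩

theorem inOmega_steadyState (hzE : 0 ≤ zE) : S.inOmega (S.steadyState zE) := by
  refine ⟨fun p hp i hi j hj1 hj2 => ?_, hzE, fun p hp => mul_nonneg (kp_div_km_pos hp).le hzE⟩
  have hR := strandFlux_mem_occDomain hp hi (mul_nonneg (kp_div_km_pos hp).le hzE)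
  exact ⟨RFM.occ_nonneg (revRate_pos hp hi) (RFM.occDomain_antitone (Nat.sub_le _ _) hR),
    (hR.2 _ (by omega)).le⟩

theorem isSteady_steadyState (hzE : 0 ≤ zE) : S.isSteady (S.steadyState zE) := by
  refine ⟨fun p hp i hi j hj1 hj2 => ?_, fun p hp => ?_, ?_⟩
  · rw [fx, flow_steadyState hp hi hzE _ (by omega), flow_steadyState hp hi hzE _ hj2, sub_self]
  · have hflows : ∀ i ∈ Finset.range (S.s p),
        (S.m p i : ℝ) * S.flow (S.steadyState zE) p i (S.n p i) =
          S.m p i * S.flow (S.steadyState zE) p i 0 := fun i hi => by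
      rw [flow_steadyState hp (Finset.mem_range.1 hi) hzE _ le_rfl,
        flow_steadyState hp (Finset.mem_range.1 hi) hzE _ (Nat.zero_le _)]
    rw [fz, Finset.sum_congr rfl hflows, add_sub_cancel_right]
    simp only [steadyState]
    field_simp [(S.hkm p hp).ne']
    ring
  · rw [fzE, ← Finset.sum_sub_distrib]
    refine Finset.sum_eq_zero fun p hp => ?_
    simp only [steadyState]
    field_simp [(S.hkm p (Finset.mem_range.1 hp)).ne']
    ring

theorem mapsTo_kp_div_km_mul (hp : p < S.M) :
    MapsTo (fun zE => S.kp p / S.km p * zE) (Ici 0) (Ici 0) :=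
  fun _ hzE => mul_nonneg (kp_div_km_pos hp).le hzE

theorem mapsTo_strandFlux (hp : p < S.M) (hi : i < S.s p) (j : ℕ) :
    MapsTo (S.strandFlux p i) (Ici 0) (RFM.occDomain (S.revRate p i) (S.n p i - j)) :=
  fun _ hz => RFM.occDomain_antitone (Nat.sub_le _ _) (strandFlux_mem_occDomain hp hi hz)

theorem monotoneOn_steadyState_x (hp : p < S.M) (hi : i < S.s p) (j : ℕ) :
    MonotoneOn (fun zE => (S.steadyState zE).x p i j) (Ici 0) :=
  (RFM.strictMonoOn_occ (revRate_pos hp hi) _).monotoneOn.comp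
    ((monotoneOn_strandFlux hp hi).comp
      (fun _ _ _ _ h => mul_le_mul_of_nonneg_left h (kp_div_km_pos hp).le)
      (mapsTo_kp_div_km_mul hp))
    ((mapsTo_strandFlux hp hi j).comp (mapsTo_kp_div_km_mul hp))

theorem continuousOn_steadyState_x (hp : p < S.M) (hi : i < S.s p) (j : ℕ) :
    ContinuousOn (fun zE => (S.steadyState zE).x p i j) (Ici 0) :=
  (RFM.continuousOn_occ (revRate_pos hp hi) _).comp
    ((continuousOn_strandFlux hp hi).comp (continuousOn_const.mul continuousOn_id)
      (mapsTo_kp_div_km_mul hp))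
    ((mapsTo_strandFlux hp hi j).comp (mapsTo_kp_div_km_mul hp))

theorem strictMonoOn_NrOf_steadyState :
    StrictMonoOn (fun zE => S.NrOf (S.steadyState zE)) (Ici 0) := fun _ ha _ hb hab =>
  NrOf_lt_NrOf (fun _ hp _ hi j _ _ => monotoneOn_steadyState_x hp hi j ha hb hab.le)
    (fun _ hp => mul_le_mul_of_nonneg_left hab.le (kp_div_km_pos hp).le) hab

theorem continuousOn_NrOf_steadyState :
    ContinuousOn (fun zE => S.NrOf (S.steadyState zE)) (Ici 0) :=
  continuousOn_NrOf (fun _ hp _ hi j => continuousOn_steadyState_x hp hi j)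
    (fun _ _ => continuousOn_const.mul continuousOn_id) continuousOn_id

theorem NrOf_steadyState_zero : S.NrOf (S.steadyState 0) = 0 := by
  simp only [NrOf, steadyState, mul_zero, Finset.sum_const_zero, zero_add]
  refine Finset.sum_eq_zero fun p hp => Finset.sum_eq_zero fun i hi => ?_
  simp [strandFlux_zero (Finset.mem_range.1 hp) (Finset.mem_range.1 hi)]

theorem exists_pos_NrOf_steadyState_eq {Nr : ℝ} (hNr : 0 < Nr) :
    ∃ zE, 0 < zE ∧ S.NrOf (S.steadyState zE) = Nr := by
  obtain ⟨zE, hzE, hF⟩ := intermediate_value_Icc hNr.le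
    (continuousOn_NrOf_steadyState.mono Icc_subset_Ici_self)
    ⟨NrOf_steadyState_zero.trans_le hNr.le, zE_le_NrOf (inOmega_steadyState hNr.le)⟩
  refine ⟨zE, hzE.1.lt_of_ne ?_, hF⟩
  rintro rfl
  exact hNr.ne (NrOf_steadyState_zero.symm.trans hF)

end steadyState

theorem pool_eq_of_isSteady {st : ORFMState} (hst : S.isSteady st) (hp : p < S.M) :
    st.z p = S.kp p / S.km p * st.zE := by
  have h := hst.2.1 p hp
  rw [fz, Finset.sum_congr rfl fun i hi =>
    congrArg _ (flow_eq_flow_zero (hst.1 p hp i (Finset.mem_range.1 hi)) _ le_rfl),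
    add_sub_cancel_right] at h
  field_simp [(S.hkm p hp).ne']
  linarith

theorem stateEq_steadyState {st : ORFMState} (hΩ : S.inOmega st) (hst : S.isSteady st) :
    S.stateEq st (S.steadyState st.zE) := by
  refine ⟨fun p hp i hi j hj1 hj2 => ?_, fun p hp => pool_eq_of_isSteady hst hp, rfl⟩
  have hn := S.hn p hp i hi
  have hμ := revRate_pos hp hi
  have hb := isBalanced_strandOcc hp hi (hst.1 p hp i hi)
  have hR : 0 ≤ S.flow st p i (S.n p i) := by
    rw [flow_n st hp hi, strandOcc, if_neg (by omega)]
    exact mul_nonneg (hμ 0).le (hΩ.1 p hp i hi _ (by omega) (by omega)).1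
  have hRD := RFM.mem_occDomain_of_isBalanced hμ hb hR fun e he => by
    rw [strandOcc, if_neg he.ne]
    exact (hΩ.1 p hp i hi _ (by omega) (by omega)).2
  have hocc := RFM.eq_occ_of_isBalanced hμ hb
  have hflux : S.strandFlux p i (st.z p) = S.flow st p i (S.n p i) := by
    have h := hocc _ le_rfl
    rw [strandOcc, if_pos rfl] at h
    rw [strandFlux, h, RFM.flux_occ hμ hRD]
  have hx := hocc (S.n p i - j) (Nat.sub_le _ _)
  rw [strandOcc, if_neg (by omega), Nat.sub_sub_self hj2] at hx
  simp only [steadyState]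
  rw [← pool_eq_of_isSteady hst hp, hflux, hx]

end ORFM

/-- For every fixed total number of ribosomes `Nr > 0` there
is exactly one steady state of the ORFM in `Ω` with total ribosome count `Nr`
(uniqueness up to the meaningful coordinates), and this steady state is
strictly positive: all codon occupancies lie in `(0,1)` and all pools are
strictly positive. -/
theorem orfm_unique_positive_steady_state (S : ORFM) (Nr : ℝ) (hNr : 0 < Nr) :
    ∃ st : ORFMState,
      (S.inOmega st ∧ S.NrOf st = Nr ∧ S.isSteady st)
      ∧ (∀ p < S.M, ∀ i < S.s p, ∀ j, 1 ≤ j → j ≤ S.n p i →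
          st.x p i j ∈ Set.Ioo (0:ℝ) 1)
      ∧ 0 < st.zE ∧ (∀ p < S.M, 0 < st.z p)
      ∧ ∀ st' : ORFMState, S.inOmega st' → S.NrOf st' = Nr → S.isSteady st' →
          S.stateEq st' st := by
  obtain ⟨zE, hzE, hNrzE⟩ := ORFM.exists_pos_NrOf_steadyState_eq (S := S) hNr
  refine ⟨S.steadyState zE, ⟨ORFM.inOmega_steadyState hzE.le, hNrzE,
      ORFM.isSteady_steadyState hzE.le⟩,
    fun p hp i hi j hj1 hj2 => ORFM.steadyState_x_mem_Ioo hzE hp hi hj1 hj2, hzE,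
    fun p hp => mul_pos (ORFM.kp_div_km_pos hp) hzE, fun st hΩ hst_Nr hst => ?_⟩
  have hEq := ORFM.stateEq_steadyState hΩ hst
  have hzE_eq : st.zE = zE := ORFM.strictMonoOn_NrOf_steadyState.injOn hΩ.2.1 hzE.le
    (by rw [← ORFM.NrOf_congr hEq, hst_Nr, hNrzE])
  rwa [hzE_eq] at hEq
end

section
/- Consider the ORFM. The total ribosome count is conserved: the weighted sum of the components of the ORFM vector field, with weight 1 on the coordinates z_E and z_p and weight m^{pi} on each codon coordinate x^{pi}_j, is identically zero at every point of the state space. Consequently, along any solution (x(t), z(t)) of the ORFM, the quantity N_r(x(t), z(t)) = z_E(t) + Σ_p z_p(t) + Σ_{p,i} m^{pi} Σ_j x^{pi}_j(t) is constant in t. -/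
/-! Every ribosome flux appears twice in the vector field, once as an outflow and once as an
inflow: along a strand the codon equations telescope to initiation minus termination flux, which
the pool equation of the species books with the opposite sign, and the binding exchange between
`z_E` and `z_p` cancels in the same way. Hence the weighted sum of the field vanishes, so
`N_r` has zero derivative along every solution. -/

theorem Finset.sum_Icc_one_sub_eq {G : Type*} [AddCommGroup G] (f : ℕ → G) (n : ℕ) :
    ∑ j ∈ Finset.Icc 1 n, (f (j - 1) - f j) = f 0 - f n := by
  induction n with
  | zero => simp
  | succ n ih => rw [Finset.sum_Icc_succ_top (by omega), ih]; simp

namespace ORFM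

variable (S : ORFM)

theorem sum_fx_eq (st : ORFMState) (p i : ℕ) :
    ∑ j ∈ Finset.Icc 1 (S.n p i), S.fx st p i j
      = S.flow st p i 0 - S.flow st p i (S.n p i) :=
  Finset.sum_Icc_one_sub_eq (S.flow st p i) (S.n p i)

theorem weighted_field_sum_eq_zero (st : ORFMState) :
    (∑ p ∈ Finset.range S.M, ∑ i ∈ Finset.range (S.s p),
        (S.m p i : ℝ) * ∑ j ∈ Finset.Icc 1 (S.n p i), S.fx st p i j)
      + (∑ p ∈ Finset.range S.M, S.fz st p) + S.fzE st = 0 := by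
  simp only [fz, fzE, sum_fx_eq, mul_sub]
  rw [← Finset.sum_sub_distrib, ← Finset.sum_add_distrib, ← Finset.sum_add_distrib]
  refine Finset.sum_eq_zero fun p _ => ?_
  rw [Finset.sum_sub_distrib]
  ring

theorem hasDerivAt_NrOf {traj : ℝ → ORFMState} (hsol : S.isSolution traj) {t : ℝ}
    (ht : 0 ≤ t) :
    HasDerivAt (fun τ => S.NrOf (traj τ))
      (S.fzE (traj t) + ∑ p ∈ Finset.range S.M, S.fz (traj t) p
        + ∑ p ∈ Finset.range S.M, ∑ i ∈ Finset.range (S.s p),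
            (S.m p i : ℝ) * ∑ j ∈ Finset.Icc 1 (S.n p i), S.fx (traj t) p i j) t := by
  obtain ⟨hx, hz, hzE⟩ := hsol
  refine ((hzE t ht).add (HasDerivAt.fun_sum fun p hp => ?_)).add
    (HasDerivAt.fun_sum fun p hp => HasDerivAt.fun_sum fun i hi =>
      (HasDerivAt.fun_sum fun j hj => ?_).const_mul _)
  · exact hz t ht p (Finset.mem_range.mp hp)
  · obtain ⟨hj1, hjn⟩ := Finset.mem_Icc.mp hj
    exact hx t ht p (Finset.mem_range.mp hp) i (Finset.mem_range.mp hi) j hj1 hjn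

theorem hasDerivAt_NrOf_zero {traj : ℝ → ORFMState} (hsol : S.isSolution traj) {t : ℝ}
    (ht : 0 ≤ t) : HasDerivAt (fun τ => S.NrOf (traj τ)) 0 t := by
  convert S.hasDerivAt_NrOf hsol ht using 1
  linarith [S.weighted_field_sum_eq_zero (traj t)]

end ORFM

/-- Conservation of ribosomes in the ORFM: at every point of
the state space `Ω`, the weighted sum of the components of the vector field
(weight `m p i` on each codon coordinate, weight `1` on each pool coordinate)
is zero; consequently, along any solution the total ribosome count
`N_r(x(t),z(t))` is constant in `t`. -/
theorem orfm_conservation (S : ORFM) :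
    (∀ st : ORFMState, S.inOmega st →
      (∑ p ∈ Finset.range S.M, ∑ i ∈ Finset.range (S.s p),
          (S.m p i : ℝ) * ∑ j ∈ Finset.Icc 1 (S.n p i), S.fx st p i j)
        + (∑ p ∈ Finset.range S.M, S.fz st p) + S.fzE st = 0)
      ∧ ∀ traj : ℝ → ORFMState, S.isSolution traj →
          ∀ t, 0 ≤ t → S.NrOf (traj t) = S.NrOf (traj 0) := by
  refine ⟨fun st _ => S.weighted_field_sum_eq_zero st, fun traj hsol t ht => ?_⟩
  have hderiv : ∀ u ∈ Set.Icc 0 t, HasDerivAt (fun τ => S.NrOf (traj τ)) 0 u :=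
    fun u hu => S.hasDerivAt_NrOf_zero hsol hu.1
  exact constant_of_has_deriv_right_zero
    (fun u hu => (hderiv u hu).continuousAt.continuousWithinAt)
    (fun u hu => (hderiv u (Set.Ico_subset_Icc_self hu)).hasDerivWithinAt)
    t ⟨ht, le_rfl⟩
end

section
/- Consider the ORFM. At any steady state (x_e, z_e) ∈ Ω of the ORFM (a point where all components of the vector field vanish), detailed pool balance holds: k_p^+ z_{e,E} = k_p^- z_{e,p} for every species p = 1,…,M; equivalently z_{e,p} = K_p z_{e,E} where K_p := k_p^+ / k_p^-. -/
/-- Detailed pool balance at steady state: at any steady state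
`(x_e, z_e) ∈ Ω` of the ORFM, `k_p⁺ z_{e,E} = k_p⁻ z_{e,p}` for every species
`p`; equivalently `z_{e,p} = K_p z_{e,E}` with `K_p = k_p⁺ / k_p⁻`. -/
theorem orfm_pool_detailed_balance (S : ORFM) (st : ORFMState)
    (hΩ : S.inOmega st) (hss : S.isSteady st) :
    ∀ p < S.M, S.kp p * st.zE = S.km p * st.z p
      ∧ st.z p = (S.kp p / S.km p) * st.zE := by
  intro p hp
  obtain ⟨hx, hz, hzE⟩ := hss
  have key : ∀ i < S.s p, S.flow st p i (S.n p i) = S.flow st p i 0 := by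
    intro i hi
    have main : ∀ k, k ≤ S.n p i → S.flow st p i k = S.flow st p i 0 := by
      intro k hk
      induction k with
      | zero => rfl
      | succ k ih =>
        have h1 := hx p hp i hi (k + 1) (by omega) hk
        unfold ORFM.fx at h1
        simp only [Nat.add_sub_cancel] at h1
        have h2 := ih (by omega)
        linarith
    exact main _ le_rfl
  have hsum : ∑ i ∈ Finset.range (S.s p), (S.m p i : ℝ) * S.flow st p i (S.n p i)
      = ∑ i ∈ Finset.range (S.s p), (S.m p i : ℝ) * S.flow st p i 0 := by
    refine Finset.sum_congr rfl fun i hi => ?_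
    rw [key i (Finset.mem_range.mp hi)]
  have hfz := hz p hp
  unfold ORFM.fz at hfz
  rw [hsum] at hfz
  have h1 : S.kp p * st.zE = S.km p * st.z p := by linarith
  have hkm := S.hkm p hp
  refine ⟨h1, ?_⟩
  field_simp
  linarith
end

section
/- Consider the ORFM, and assume in addition that each G^{pi} has strictly positive derivative on (0,∞). At any point of Ω with all codon occupancies x^{pi}_j ∈ (0,1), z_E > 0, and z_p > 0 for all p, the Jacobian matrix of the ORFM vector field is Metzler with strictly negative diagonal: every off-diagonal entry is nonnegative and every diagonal entry is strictly negative. -/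
/-- An index for a coordinate of the ORFM state. -/
inductive Coord where
  | codon (p i j : ℕ)
  | pool (p : ℕ)
  | poolE
  deriving DecidableEq

/-- The meaningful coordinates of the ORFM `S`. -/
def ORFM.relevant (S : ORFM) : Coord → Prop
  | .codon p i j => p < S.M ∧ i < S.s p ∧ 1 ≤ j ∧ j ≤ S.n p i
  | .pool p => p < S.M
  | .poolE => True

/-- The component of the ORFM vector field corresponding to a coordinate. -/
noncomputable def ORFM.component (S : ORFM) (st : ORFMState) : Coord → ℝ
  | .codon p i j => S.fx st p i j
  | .pool p => S.fz st p
  | .poolE => S.fzE st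

/-- Replace the value of one coordinate of a state. -/
def ORFMState.upd (st : ORFMState) : Coord → ℝ → ORFMState
  | .codon p i j, v =>
      { st with x := fun p' i' j' =>
          if p' = p ∧ i' = i ∧ j' = j then v else st.x p' i' j' }
  | .pool p, v => { st with z := Function.update st.z p v }
  | .poolE, v => { st with zE := v }

/-- Read the value of one coordinate of a state. -/
def ORFMState.read (st : ORFMState) : Coord → ℝ
  | .codon p i j => st.x p i j
  | .pool p => st.z p
  | .poolE => st.zE

/-!
The ORFM is a compartmental system. The flux `flow st p i k` depends only on the occupancy of
its source (the pool `z p` for initiation, codon `k` otherwise) and of its target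
(codon `k + 1`): it is nondecreasing in the first, because `G` is increasing, and nonincreasing
in the second. A component of the vector field is inflows minus outflows, hence nondecreasing in
every other coordinate, and a monotone function has nonnegative derivative. On the diagonal,
every compartment loses mass at a rate linear in its own occupancy with a positive coefficient,
and what remains is nonincreasing in that occupancy; so the derivative is at most minus that
coefficient.
-/

open Set Finset

theorem HasDerivAt.nonneg_of_monotoneOn_Ici {f : ℝ → ℝ} {f' a : ℝ} (hf : HasDerivAt f f' a)
    (hmono : MonotoneOn f (Ici a)) : 0 ≤ f' := by
  have hacc : AccPt a (Filter.principal (Ici a)) := by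
    rw [accPt_principal_iff_nhdsWithin, Ici_sdiff_left]
    infer_instance
  exact hf.hasDerivWithinAt.nonneg_of_monotoneOn hacc hmono

theorem HasDerivAt.le_neg_of_antitoneOn_add_mul_Ici {f : ℝ → ℝ} {f' a κ : ℝ}
    (hf : HasDerivAt f f' a) (hanti : AntitoneOn (fun v => f v + κ * v) (Ici a)) : f' ≤ -κ := by
  have := ((hf.add ((hasDerivAt_id a).const_mul κ)).neg).nonneg_of_monotoneOn_Ici hanti.neg
  linarith

namespace ORFMState

theorem read_upd_self (st : ORFMState) (c : Coord) (v : ℝ) : (st.upd c v).read c = v := by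
  cases c <;> simp [upd, read]

theorem read_upd_of_ne (st : ORFMState) {c c' : Coord} (h : c' ≠ c) (v : ℝ) :
    (st.upd c v).read c' = st.read c' := by
  cases c <;> cases c' <;> simp_all [upd, read, Function.update_of_ne]

theorem monotone_read_upd (st : ORFMState) (c c' : Coord) :
    Monotone fun v => (st.upd c v).read c' := by
  by_cases h : c' = c
  · subst h
    intro a b hab
    simpa only [read_upd_self] using hab
  · simpa only [read_upd_of_ne st h] using monotone_const

end ORFMState

namespace ORFM

theorem inOmega.read_nonneg {S : ORFM} {st : ORFMState} (hst : S.inOmega st) {c : Coord}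
    (hc : S.relevant c) : 0 ≤ st.read c := by
  match c, hc with
  | .codon p i j, ⟨hp, hi, hj1, hjn⟩ => exact (hst.1 p hp i hi j hj1 hjn).1
  | .pool p, hp => exact hst.2.2 p hp
  | .poolE, _ => exact hst.2.1

variable (S : ORFM) {st : ORFMState}

def flowSource (p i k : ℕ) : Coord := if k = 0 then .pool p else .codon p i k

theorem flowSource_of_ne_zero {p i k : ℕ} (hk : k ≠ 0) : flowSource p i k = .codon p i k :=
  if_neg hk

theorem relevant_flowSource {p i k : ℕ} (hp : p < S.M) (hi : i < S.s p) (hk : k ≤ S.n p i) :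
    S.relevant (flowSource p i k) := by
  unfold flowSource
  split_ifs with h0
  · exact hp
  · exact ⟨hp, hi, by omega, hk⟩

def flowLaw (p i k : ℕ) (s t : ℝ) : ℝ :=
  if k = 0 then S.lam p i 0 * S.G p i s * (1 - t)
  else if k = S.n p i then S.lam p i k * s
  else S.lam p i k * s * (1 - t)

theorem flowLaw_monotoneOn_left {p i k : ℕ} (hp : p < S.M) (hi : i < S.s p) (hk : k ≤ S.n p i)
    {t : ℝ} (ht : k ≠ S.n p i → t ≤ 1) :
    MonotoneOn (fun s => S.flowLaw p i k s t) (Ici 0) := by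
  intro a ha b hb hab
  have hlam := (S.hlam p hp i hi k hk).le
  have h1t : k ≠ S.n p i → 0 ≤ 1 - t := fun h => sub_nonneg.2 (ht h)
  simp only [flowLaw]
  split_ifs with h0 hn
  · subst h0
    have hG := (S.hG_mono p hp i hi).monotoneOn ha hb hab
    have := h1t (by have := S.hn p hp i hi; omega)
    gcongr
  · gcongr
  · have := h1t hn
    gcongr

theorem flowLaw_antitone_right {p i k : ℕ} (hp : p < S.M) (hi : i < S.s p) (hk : k ≤ S.n p i)
    {s : ℝ} (hs : 0 ≤ s) : Antitone (fun t => S.flowLaw p i k s t) := by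
  intro a b hab
  have hlam := (S.hlam p hp i hi k hk).le
  simp only [flowLaw]
  split_ifs with h0 hn
  · subst h0
    have hG : 0 ≤ S.G p i s :=
      S.hG_zero p hp i hi ▸ (S.hG_mono p hp i hi).monotoneOn self_mem_Ici hs hs
    gcongr
  · rfl
  · gcongr

theorem flow_eq_flowLaw (st : ORFMState) (p i k : ℕ) :
    S.flow st p i k =
      S.flowLaw p i k (st.read (flowSource p i k)) (st.read (.codon p i (k + 1))) := by
  by_cases hk : k = 0
  · subst hk
    rfl
  · simp only [flow, flowLaw, flowSource, if_neg hk]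
    rfl

theorem flow_monotoneOn (hst : S.inOmega st) {p i k : ℕ} (hp : p < S.M) (hi : i < S.s p)
    (hk : k ≤ S.n p i) {c : Coord} (hc : c ≠ .codon p i (k + 1)) :
    MonotoneOn (fun v => S.flow (st.upd c v) p i k) (Ici 0) := by
  simp only [flow_eq_flowLaw, st.read_upd_of_ne hc.symm]
  by_cases hs : flowSource p i k = c
  · subst hs
    simp only [ORFMState.read_upd_self]
    exact S.flowLaw_monotoneOn_left hp hi hk fun hkn =>
      (hst.1 p hp i hi (k + 1) (by omega) (by omega)).2
  · simp only [st.read_upd_of_ne hs]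
    exact monotoneOn_const

theorem flow_antitone (hst : S.inOmega st) {p i k : ℕ} (hp : p < S.M) (hi : i < S.s p)
    (hk : k ≤ S.n p i) {c : Coord} (hc : c ≠ flowSource p i k) :
    Antitone (fun v => S.flow (st.upd c v) p i k) := by
  simp only [flow_eq_flowLaw, st.read_upd_of_ne hc.symm]
  have hsource := hst.read_nonneg (S.relevant_flowSource hp hi hk)
  exact (S.flowLaw_antitone_right hp hi hk hsource).comp_monotone (st.monotone_read_upd c _)

theorem monotoneOn_component_upd (hst : S.inOmega st) {c₁ c₂ : Coord} (h₁ : S.relevant c₁)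
    (h₂ : S.relevant c₂) (hne : c₁ ≠ c₂) :
    MonotoneOn (fun v => S.component (st.upd c₂ v) c₁) (Ici 0) := by
  intro a ha b hb hab
  match c₁, h₁ with
  | .codon p i j, ⟨hp, hi, hj1, hjn⟩ =>
    have hin := S.flow_monotoneOn hst hp hi (k := j - 1) (by omega) (c := c₂)
      (by rw [Nat.sub_add_cancel hj1]; exact hne.symm)
    have hout := S.flow_antitone hst hp hi hjn (c := c₂)
      (by rw [flowSource_of_ne_zero (by omega)]; exact hne.symm)
    simp only [component, fx]
    linarith [hin ha hb hab, hout hab]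
  | .pool p, hp =>
    simp only [component, fz]
    gcongr with i hi i hi
    · exact (S.hkp p hp).le
    · exact st.monotone_read_upd c₂ .poolE hab
    · exact (S.hkm p hp).le
    · exact ((st.read_upd_of_ne hne b).trans (st.read_upd_of_ne hne a).symm).le
    · refine S.flow_monotoneOn hst hp (mem_range.1 hi) le_rfl ?_ ha hb hab
      rintro rfl
      exact absurd h₂.2.2.2 (by omega)
    · exact S.flow_antitone hst hp (mem_range.1 hi) (Nat.zero_le _) hne.symm hab
  | .poolE, _ =>
    simp only [component, fzE]
    gcongr with p hp p hp
    · exact (S.hkm p (mem_range.1 hp)).le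
    · exact st.monotone_read_upd c₂ (.pool p) hab
    · exact (S.hkp p (mem_range.1 hp)).le
    · exact ((st.read_upd_of_ne hne b).trans (st.read_upd_of_ne hne a).symm).le

def outRate (st : ORFMState) : Coord → ℝ
  | .codon p i j => if j = S.n p i then S.lam p i j else S.lam p i j * (1 - st.x p i (j + 1))
  | .pool p => S.km p
  | .poolE => ∑ p ∈ range S.M, S.kp p

theorem outRate_pos (hx : ∀ p < S.M, ∀ i < S.s p, ∀ j, 1 ≤ j → j ≤ S.n p i → st.x p i j < 1)
    {c : Coord} (hc : S.relevant c) : 0 < S.outRate st c := by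
  match c, hc with
  | .codon p i j, ⟨hp, hi, hj1, hjn⟩ =>
    have hlam := S.hlam p hp i hi j hjn
    simp only [outRate]
    split_ifs with hn
    · exact hlam
    · exact mul_pos hlam (sub_pos.2 (hx p hp i hi (j + 1) (by omega) (by omega)))
  | .pool p, hp => exact S.hkm p hp
  | .poolE, _ => exact sum_pos (fun p hp => S.hkp p (mem_range.1 hp)) ⟨0, mem_range.2 S.hM⟩

theorem flow_upd_codon_self {p i j : ℕ} (hj : j ≠ 0) (v : ℝ) :
    S.flow (st.upd (.codon p i j) v) p i j = S.outRate st (.codon p i j) * v := by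
  simp only [flow, outRate, ORFMState.upd, hj, if_false, and_self, if_true, Nat.succ_ne_self,
    and_false]
  split_ifs <;> ring

theorem antitoneOn_component_upd_add_outRate_mul (hst : S.inOmega st) {c : Coord}
    (hc : S.relevant c) :
    AntitoneOn (fun v => S.component (st.upd c v) c + S.outRate st c * v) (Ici 0) := by
  intro a ha b hb hab
  match c, hc with
  | .codon p i j, ⟨hp, hi, hj1, hjn⟩ =>
    have hsource : Coord.codon p i j ≠ flowSource p i (j - 1) := by
      unfold flowSource
      split_ifs
      · simp
      · simp only [ne_eq, Coord.codon.injEq, true_and]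
        omega
    have hin := S.flow_antitone hst hp hi (by omega) hsource
    simp only [component, fx, S.flow_upd_codon_self (by omega : j ≠ 0)]
    linarith [hin hab]
  | .pool p, hp =>
    have hterm : ∑ i ∈ range (S.s p), (S.m p i : ℝ) * S.flow (st.upd (.pool p) b) p i (S.n p i)
        ≤ ∑ i ∈ range (S.s p), (S.m p i : ℝ) * S.flow (st.upd (.pool p) a) p i (S.n p i) := by
      gcongr with i hi
      have hn := S.hn p hp i (mem_range.1 hi)
      exact S.flow_antitone hst hp (mem_range.1 hi) le_rfl
        (by rw [flowSource_of_ne_zero (by omega)]; simp) hab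
    have hinit : ∑ i ∈ range (S.s p), (S.m p i : ℝ) * S.flow (st.upd (.pool p) a) p i 0
        ≤ ∑ i ∈ range (S.s p), (S.m p i : ℝ) * S.flow (st.upd (.pool p) b) p i 0 := by
      gcongr with i hi
      exact S.flow_monotoneOn hst hp (mem_range.1 hi) (Nat.zero_le _) (by simp) ha hb hab
    have hpool (v : ℝ) : (st.upd (.pool p) v).z p = v := st.read_upd_self (.pool p) v
    have hzE (v : ℝ) : (st.upd (.pool p) v).zE = st.zE := rfl
    simp only [component, fz, outRate, hpool, hzE]
    linarith
  | .poolE, _ =>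
    simp only [component, fzE, outRate, ORFMState.upd, ← sum_mul]
    linarith

end ORFM

theorem orfm_jacobian_metzler_general (S : ORFM)
    (st : ORFMState)
    (hx : ∀ p < S.M, ∀ i < S.s p, ∀ j, 1 ≤ j → j ≤ S.n p i →
        st.x p i j ∈ Set.Ioo (0:ℝ) 1)
    (hzE : 0 < st.zE) (hz : ∀ p < S.M, 0 < st.z p)
    (J : Coord → Coord → ℝ)
    (hJ : ∀ c₁ c₂, S.relevant c₁ → S.relevant c₂ →
        HasDerivAt (fun v => S.component (st.upd c₂ v) c₁) (J c₁ c₂) (st.read c₂)) :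
    (∀ c₁ c₂, S.relevant c₁ → S.relevant c₂ → c₁ ≠ c₂ → 0 ≤ J c₁ c₂)
      ∧ ∀ c, S.relevant c → J c c < 0 := by
  have hΩ : S.inOmega st :=
    ⟨fun p hp i hi j hj1 hjn => Ioo_subset_Icc_self (hx p hp i hi j hj1 hjn), hzE.le,
      fun p hp => (hz p hp).le⟩
  refine ⟨fun c₁ c₂ h₁ h₂ hne => ?_, fun c hc => ?_⟩
  · exact (hJ c₁ c₂ h₁ h₂).nonneg_of_monotoneOn_Ici
      ((S.monotoneOn_component_upd hΩ h₁ h₂ hne).mono (Ici_subset_Ici.2 (hΩ.read_nonneg h₂)))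
  · have hdiag := (hJ c c hc hc).le_neg_of_antitoneOn_add_mul_Ici
      ((S.antitoneOn_component_upd_add_outRate_mul hΩ hc).mono
        (Ici_subset_Ici.2 (hΩ.read_nonneg hc)))
    linarith [S.outRate_pos (fun p hp i hi j hj1 hjn => (hx p hp i hi j hj1 hjn).2) hc]

/-- Assume moreover that each `G^{pi}` has strictly positive
derivative on `(0,∞)`. At any point of `Ω` with all codon occupancies in
`(0,1)` and all pools strictly positive, the Jacobian `J` of the ORFM vector
field (any matrix of partial derivatives, expressed through `HasDerivAt`) is
Metzler with strictly negative diagonal: all off-diagonal entries over the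
meaningful coordinates are nonnegative and all diagonal entries are strictly
negative. -/
theorem orfm_jacobian_metzler (S : ORFM)
    (hG' : ∀ p < S.M, ∀ i < S.s p, ∀ v : ℝ, 0 < v → 0 < deriv (S.G p i) v)
    (st : ORFMState)
    (hx : ∀ p < S.M, ∀ i < S.s p, ∀ j, 1 ≤ j → j ≤ S.n p i →
        st.x p i j ∈ Set.Ioo (0:ℝ) 1)
    (hzE : 0 < st.zE) (hz : ∀ p < S.M, 0 < st.z p)
    (J : Coord → Coord → ℝ)
    (hJ : ∀ c₁ c₂, S.relevant c₁ → S.relevant c₂ →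
        HasDerivAt (fun v => S.component (st.upd c₂ v) c₁) (J c₁ c₂) (st.read c₂)) :
    (∀ c₁ c₂, S.relevant c₁ → S.relevant c₂ → c₁ ≠ c₂ → 0 ≤ J c₁ c₂)
      ∧ ∀ c, S.relevant c → J c c < 0 :=
  orfm_jacobian_metzler_general S st hx hzE hz J hJ
end

section
/- Consider a cross-talk RFM of length n with M ribosome species, constant inputs u^p > 0, and homogeneous elongation rates: λ^p_j = λ_j for all species p and all j = 1,…,n. Then the species sums s_j(t) = Σ_{p=1}^M x^p_j(t) satisfy, along any solution of the cross-talk RFM, the standard RFM equations of length n with rates λ_1,…,λ_n, unit input, and effective initiation rate λ^s_0 := Σ_{p=1}^M λ^p_0 u^p: ds_1/dt = λ^s_0 (1 − s_1) − λ_1 s_1 (1 − s_2); ds_j/dt = λ_{j−1} s_{j−1} (1 − s_j) − λ_j s_j (1 − s_{j+1}) for 1 < j < n; ds_n/dt = λ_{n−1} s_{n−1} (1 − s_n) − λ_n s_n. Moreover each individual occupancy satisfies dx^p_j/dt = λ_{j−1} (1 − s_j) x^p_{j−1} − λ_j (1 − s_{j+1}) x^p_j for 1 < j < n. -/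
/-- Ribosomal flux of species `p` from codon `k` to codon `k+1` in a cross-talk
RFM of length `n` with `M` species, homogeneous elongation rates `lam j`
(`j = 1,…,n`), species initiation rates `lam0 p` and constant inputs `u p`;
`x p j` is the occupancy of species `p` at codon `j` (1-based), and the total
occupancy of codon `j` is `s j = ∑_{p<M} x p j`. -/
noncomputable def crossFlow (M n : ℕ) (lam0 u lam : ℕ → ℝ)
    (x : ℕ → ℕ → ℝ) (p k : ℕ) : ℝ :=
  if k = 0 then lam0 p * u p * (1 - ∑ q ∈ Finset.range M, x q 1)
  else if k = n then lam n * x p n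
  else lam k * x p k * (1 - ∑ q ∈ Finset.range M, x q (k + 1))

/-- Component `dx^p_j/dt` of the cross-talk RFM vector field. -/
noncomputable def crossField (M n : ℕ) (lam0 u lam : ℕ → ℝ)
    (x : ℕ → ℕ → ℝ) (p j : ℕ) : ℝ :=
  crossFlow M n lam0 u lam x p (j - 1) - crossFlow M n lam0 u lam x p j

/-- Flux from site `k` to site `k+1` of a standard RFM of length `n` with unit
input, initiation rate `lam0s` and rates `lam j`, state `s` (1-based). -/
noncomputable def rfmFlow (n : ℕ) (lam0s : ℝ) (lam : ℕ → ℝ)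
    (s : ℕ → ℝ) (k : ℕ) : ℝ :=
  if k = 0 then lam0s * (1 - s 1)
  else if k = n then lam n * s n
  else lam k * s k * (1 - s (k + 1))

/-! With homogeneous elongation rates every species sees the same rate `λ_k (1 - s_{k+1})` at
codon `k`, so each cross-talk flux is that common factor times the species' own occupancy
(the initiation flux being `λ^p_0 u^p (1 - s_1)`). Summing over species therefore yields the
standard RFM fluxes of the sums. -/

section

variable (M n : ℕ) (lam0 u lam : ℕ → ℝ) (x : ℕ → ℕ → ℝ)

theorem sum_crossFlow_eq_rfmFlow (k : ℕ) :
    ∑ p ∈ Finset.range M, crossFlow M n lam0 u lam x p k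
      = rfmFlow n (∑ p ∈ Finset.range M, lam0 p * u p) lam
          (fun j => ∑ p ∈ Finset.range M, x p j) k := by
  unfold crossFlow rfmFlow
  split_ifs <;> simp only [Finset.sum_mul, Finset.mul_sum]

theorem sum_crossField_eq_rfmFlow_sub (j : ℕ) :
    ∑ p ∈ Finset.range M, crossField M n lam0 u lam x p j
      = rfmFlow n (∑ p ∈ Finset.range M, lam0 p * u p) lam
            (fun j' => ∑ p ∈ Finset.range M, x p j') (j - 1)
        - rfmFlow n (∑ p ∈ Finset.range M, lam0 p * u p) lam
            (fun j' => ∑ p ∈ Finset.range M, x p j') j := by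
  simp only [crossField, Finset.sum_sub_distrib, sum_crossFlow_eq_rfmFlow]

theorem crossField_of_one_lt_of_lt (p : ℕ) {j : ℕ} (hj1 : 1 < j) (hjn : j < n) :
    crossField M n lam0 u lam x p j
      = lam (j - 1) * (1 - ∑ q ∈ Finset.range M, x q j) * x p (j - 1)
        - lam j * (1 - ∑ q ∈ Finset.range M, x q (j + 1)) * x p j := by
  have hpred : j - 1 + 1 = j := by omega
  simp only [crossField, crossFlow, if_neg (show j - 1 ≠ 0 by omega),
    if_neg (show j - 1 ≠ n by omega), if_neg (show j ≠ 0 by omega), if_neg hjn.ne, hpred]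
  ring

end

theorem crosstalk_homogeneous_species_sums_general (M n : ℕ)
    (lam0 u lam : ℕ → ℝ)
    (X : ℝ → ℕ → ℕ → ℝ)
    (hsol : ∀ t : ℝ, ∀ p < M, ∀ j, 1 ≤ j → j ≤ n →
        HasDerivAt (fun τ => X τ p j) (crossField M n lam0 u lam (X t) p j) t) :
    (∀ t : ℝ, ∀ j, 1 ≤ j → j ≤ n →
        HasDerivAt (fun τ => ∑ p ∈ Finset.range M, X τ p j)
          (rfmFlow n (∑ p ∈ Finset.range M, lam0 p * u p) lam
              (fun j' => ∑ p ∈ Finset.range M, X t p j') (j - 1)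
            - rfmFlow n (∑ p ∈ Finset.range M, lam0 p * u p) lam
              (fun j' => ∑ p ∈ Finset.range M, X t p j') j) t)
      ∧ ∀ t : ℝ, ∀ p < M, ∀ j, 1 < j → j < n →
          HasDerivAt (fun τ => X τ p j)
            (lam (j - 1) * (1 - ∑ q ∈ Finset.range M, X t q j) * X t p (j - 1)
              - lam j * (1 - ∑ q ∈ Finset.range M, X t q (j + 1)) * X t p j) t := by
  refine ⟨fun t j hj1 hjn => ?_, fun t p hp j hj1 hjn => ?_⟩
  · rw [← sum_crossField_eq_rfmFlow_sub]
    exact HasDerivAt.fun_sum fun p hp => hsol t p (Finset.mem_range.mp hp) j hj1 hjn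
  · rw [← crossField_of_one_lt_of_lt M n lam0 u lam (X t) p hj1 hjn]
    exact hsol t p hp j hj1.le hjn.le

/-- In a cross-talk RFM with homogeneous elongation rates
`λ^p_j = λ_j` and constant inputs `u^p > 0`, along any solution the species
sums `s_j(t) = ∑_p x^p_j(t)` satisfy the standard RFM equations of length `n`
with rates `λ_1,…,λ_n`, unit input, and effective initiation rate
`λ^s_0 = ∑_p λ^p_0 u^p`; moreover each individual occupancy satisfies
`dx^p_j/dt = λ_{j-1}(1-s_j)x^p_{j-1} - λ_j(1-s_{j+1})x^p_j` for `1 < j < n`. -/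
theorem crosstalk_homogeneous_species_sums (M n : ℕ) (hM : 0 < M) (hn : 0 < n)
    (lam0 u lam : ℕ → ℝ)
    (hlam0 : ∀ p < M, 0 < lam0 p) (hu : ∀ p < M, 0 < u p)
    (hlam : ∀ j, 1 ≤ j → j ≤ n → 0 < lam j)
    (X : ℝ → ℕ → ℕ → ℝ)
    (hbox : ∀ t : ℝ, ∀ p < M, ∀ j, 1 ≤ j → j ≤ n → X t p j ∈ Set.Icc (0:ℝ) 1)
    (hsum : ∀ t : ℝ, ∀ j, 1 ≤ j → j ≤ n → ∑ p ∈ Finset.range M, X t p j ≤ 1)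
    (hsol : ∀ t : ℝ, ∀ p < M, ∀ j, 1 ≤ j → j ≤ n →
        HasDerivAt (fun τ => X τ p j) (crossField M n lam0 u lam (X t) p j) t) :
    (∀ t : ℝ, ∀ j, 1 ≤ j → j ≤ n →
        HasDerivAt (fun τ => ∑ p ∈ Finset.range M, X τ p j)
          (rfmFlow n (∑ p ∈ Finset.range M, lam0 p * u p) lam
              (fun j' => ∑ p ∈ Finset.range M, X t p j') (j - 1)
            - rfmFlow n (∑ p ∈ Finset.range M, lam0 p * u p) lam
              (fun j' => ∑ p ∈ Finset.range M, X t p j') j) t)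
      ∧ ∀ t : ℝ, ∀ p < M, ∀ j, 1 < j → j < n →
          HasDerivAt (fun τ => X τ p j)
            (lam (j - 1) * (1 - ∑ q ∈ Finset.range M, X t q j) * X t p (j - 1)
              - lam j * (1 - ∑ q ∈ Finset.range M, X t q (j + 1)) * X t p j) t :=
  crosstalk_homogeneous_species_sums_general M n lam0 u lam X hsol
end

section
/- Consider a cross-talk RFM of length n with M ribosome species, constant inputs u^p > 0, and homogeneous elongation rates λ^p_j = λ_j for all p and all j = 1,…,n; set λ^s_0 := Σ_{p=1}^M λ^p_0 u^p. Let (s_1,…,s_n) ∈ (0,1)^n be a steady state of the standard RFM of length n with rates λ^s_0, λ_1,…,λ_n and unit input (so that λ^s_0 (1 − s_1) = λ_j s_j (1 − s_{j+1}) = λ_n s_n for all 1 ≤ j ≤ n−1). Then the point with x^p_j = (λ^p_0 u^p / λ_j) · (1 − s_1)/(1 − s_{j+1}) for 1 ≤ j ≤ n−1 and x^p_n = (λ^p_0 u^p / λ_n) (1 − s_1) is a steady state of the cross-talk RFM, and it satisfies Σ_{p=1}^M x^p_j = s_j for every j. -/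
/-- In a cross-talk RFM with homogeneous elongation rates and
constant inputs `u^p > 0`, let `(s_1,…,s_n) ∈ (0,1)^n` be a steady state of the
standard RFM of length `n` with initiation rate `λ^s_0 = ∑_p λ^p_0 u^p`, unit
input, and rates `λ_1,…,λ_n` (all fluxes equal). Then the point with
`x^p_j = (λ^p_0 u^p/λ_j)(1-s_1)/(1-s_{j+1})` for `1 ≤ j ≤ n-1` and
`x^p_n = (λ^p_0 u^p/λ_n)(1-s_1)` is a steady state of the cross-talk RFM and
satisfies `∑_p x^p_j = s_j` for every `j`. -/
theorem crosstalk_steady_state_from_rfm (M n : ℕ) (hM : 0 < M) (hn : 0 < n)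
    (lam0 u lam : ℕ → ℝ)
    (hlam0 : ∀ p < M, 0 < lam0 p) (hu : ∀ p < M, 0 < u p)
    (hlam : ∀ j, 1 ≤ j → j ≤ n → 0 < lam j)
    (s : ℕ → ℝ) (hs : ∀ j, 1 ≤ j → j ≤ n → s j ∈ Set.Ioo (0:ℝ) 1)
    (hflux : ∀ j, 1 ≤ j → j ≤ n - 1 →
        (∑ p ∈ Finset.range M, lam0 p * u p) * (1 - s 1)
          = lam j * s j * (1 - s (j + 1)))
    (hfluxn : (∑ p ∈ Finset.range M, lam0 p * u p) * (1 - s 1) = lam n * s n)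
    (x : ℕ → ℕ → ℝ)
    (hx : ∀ p j, x p j =
        if j = n then lam0 p * u p / lam n * (1 - s 1)
        else lam0 p * u p / lam j * ((1 - s 1) / (1 - s (j + 1)))) :
    (∀ p < M, ∀ j, 1 ≤ j → j ≤ n → crossField M n lam0 u lam x p j = 0)
      ∧ ∀ j, 1 ≤ j → j ≤ n → ∑ p ∈ Finset.range M, x p j = s j := by
  have hlamn : lam n ≠ 0 := (hlam n hn le_rfl).ne'
  have hsum : ∀ j, 1 ≤ j → j ≤ n → ∑ p ∈ Finset.range M, x p j = s j := by
    intro j h1 h2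
    rcases eq_or_lt_of_le h2 with rfl | hlt
    · have heq : ∑ p ∈ Finset.range M, x p j =
          (∑ p ∈ Finset.range M, lam0 p * u p) / lam j * (1 - s 1) := by
        rw [Finset.sum_congr rfl fun p _ => hx p j]
        simp only [eq_self_iff_true, if_true]
        rw [← Finset.sum_mul, ← Finset.sum_div]
      rw [heq]
      field_simp
      linarith [hfluxn]
    · have hjn : j ≠ n := hlt.ne
      have hs1 : (1 : ℝ) - s (j + 1) ≠ 0 := by
        have := (hs (j+1) (by omega) (by omega)).2
        linarith
      have hlamj : lam j ≠ 0 := (hlam j h1 h2).ne'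
      have heq : ∑ p ∈ Finset.range M, x p j =
          (∑ p ∈ Finset.range M, lam0 p * u p) / lam j * ((1 - s 1) / (1 - s (j+1))) := by
        rw [Finset.sum_congr rfl fun p _ => hx p j]
        simp only [if_neg hjn]
        rw [← Finset.sum_mul, ← Finset.sum_div]
      rw [heq]
      have hf := hflux j h1 (by omega)
      field_simp
      linarith [hf]
  have hflow : ∀ p, ∀ k ≤ n, crossFlow M n lam0 u lam x p k
      = lam0 p * u p * (1 - s 1) := by
    intro p k hk
    unfold crossFlow
    by_cases h0 : k = 0
    · rw [if_pos h0, hsum 1 le_rfl hn]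
    rw [if_neg h0]
    by_cases hkn : k = n
    · subst hkn
      rw [if_pos rfl, hx p k, if_pos rfl]
      field_simp
    · rw [if_neg hkn, hx p k, if_neg hkn, hsum (k+1) (by omega) (by omega)]
      have hs1 : (1 : ℝ) - s (k + 1) ≠ 0 := by
        have := (hs (k+1) (by omega) (by omega)).2
        linarith
      have hlamk : lam k ≠ 0 := (hlam k (by omega) (by omega)).ne'
      field_simp
  refine ⟨fun p _ j h1 h2 => ?_, hsum⟩
  unfold crossField
  rw [hflow p (j-1) (by omega), hflow p j h2, sub_self]
end

section
/- Consider two copies of the ORFM that share the same species count M, strand data (s_p, n^{pi}, m^{pi}, λ^{pi}_j, G^{pi}) and the same total ribosome count N_r > 0, and whose binding rates agree except for one distinguished species q, for which the ratios satisfy K'_q > K_q where K_p := k_p^+ / k_p^- and K'_p := k'^+_p / k'^-_p, with K'_p = K_p for all p ≠ q. Let (x_e, z_e) and (x'_e, z'_e) be the unique steady states of the two systems on the stoichiometric class N_r. Then z'_{e,q} > z_{e,q} and x'^{qi}_{e,j} > x^{qi}_{e,j} for every strand i of species q and every codon j, while z'_{e,E} < z_{e,E}, and for every species p ≠ q: z'_{e,p}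 < z_{e,p} and x'^{pi}_{e,j} < x^{pi}_{e,j} for every strand i and codon j. -/
/-- Backward induction on strand codons. -/
lemma orfm_back_ind {n : ℕ} {P : ℕ → Prop} (hbase : P n)
    (hstep : ∀ j, 1 ≤ j → j < n → P (j + 1) → P j) :
    ∀ j, 1 ≤ j → j ≤ n → P j := by
  have key : ∀ d j, j + d = n → 1 ≤ j → P j := by
    intro d
    induction d with
    | zero =>
      intro j he _
      have : j = n := by omega
      exact this ▸ hbase
    | succ d ih =>
      intro j he h1
      exact hstep j h1 (by omega) (ih (j + 1) (by omega) (by omega))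
  intro j h1 h2
  exact key (n - j) j (by omega) h1

/-- Steady-state equations on one strand: constant flux `c`. -/
def StrandEq (n : ℕ) (lam : ℕ → ℝ) (r : ℝ) (x : ℕ → ℝ) (c : ℝ) : Prop :=
  r * (1 - x 1) = c ∧ (∀ j, 1 ≤ j → j < n → lam j * x j * (1 - x (j + 1)) = c)
    ∧ lam n * x n = c

section Strand

variable {n : ℕ} {lam : ℕ → ℝ} {r r' : ℝ} {x x' : ℕ → ℝ} {c c' : ℝ}

lemma strand_c_nonneg (hn : 1 ≤ n) (hlam : ∀ k ≤ n, 0 < lam k)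
    (hx : ∀ j, 1 ≤ j → j ≤ n → 0 ≤ x j ∧ x j ≤ 1)
    (hS : StrandEq n lam r x c) : 0 ≤ c := by
  have := hS.2.2
  nlinarith [hlam n le_rfl, (hx n hn le_rfl).1]

lemma strand_c_le_r (hn : 1 ≤ n) (hr : 0 ≤ r)
    (hx : ∀ j, 1 ≤ j → j ≤ n → 0 ≤ x j ∧ x j ≤ 1)
    (hS : StrandEq n lam r x c) : c ≤ r := by
  have := hS.1
  nlinarith [(hx 1 le_rfl hn).1]

lemma strand_zero (hn : 1 ≤ n) (hlam : ∀ k ≤ n, 0 < lam k)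
    (hx : ∀ j, 1 ≤ j → j ≤ n → 0 ≤ x j ∧ x j ≤ 1)
    (hS : StrandEq n lam r x c) (hc : c = 0) :
    ∀ j, 1 ≤ j → j ≤ n → x j = 0 := by
  refine orfm_back_ind ?_ ?_
  · have := hS.2.2
    have h := hlam n le_rfl
    nlinarith [(hx n hn le_rfl).1]
  · intro j h1 h2 hnext
    have := hS.2.1 j h1 h2
    rw [hnext] at this
    have h := hlam j (by omega)
    nlinarith [(hx j h1 (by omega)).1]

lemma strand_lt_one (hn : 1 ≤ n) (hr : 0 ≤ r) (hlam : ∀ k ≤ n, 0 < lam k)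
    (hx : ∀ j, 1 ≤ j → j ≤ n → 0 ≤ x j ∧ x j ≤ 1)
    (hS : StrandEq n lam r x c) (hc : 0 < c) :
    ∀ j, 1 ≤ j → j ≤ n → x j < 1 := by
  intro j h1 h2
  rcases eq_or_lt_of_le h1 with h | h
  · have := hS.1
    nlinarith [h ▸ this]
  · have hj : 1 ≤ j - 1 := by omega
    have hj2 : j - 1 < n := by omega
    have heq := hS.2.1 (j - 1) hj hj2
    have e : j - 1 + 1 = j := by omega
    rw [e] at heq
    by_contra hcon
    push_neg at hcon
    have hnn : 0 ≤ lam (j - 1) * x (j - 1) :=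
      mul_nonneg (hlam (j - 1) (by omega)).le (hx (j - 1) hj (by omega)).1
    nlinarith

lemma strand_pos (hn : 1 ≤ n) (hlam : ∀ k ≤ n, 0 < lam k)
    (hx : ∀ j, 1 ≤ j → j ≤ n → 0 ≤ x j ∧ x j ≤ 1)
    (hS : StrandEq n lam r x c) (hc : 0 < c) :
    ∀ j, 1 ≤ j → j ≤ n → 0 < x j := by
  intro j h1 h2
  rcases eq_or_lt_of_le h2 with h | h
  · have := hS.2.2
    rw [h]
    nlinarith [hlam n le_rfl]
  · have heq := hS.2.1 j h1 h
    by_contra hcon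
    push_neg at hcon
    have h1x : 0 ≤ 1 - x (j + 1) := by
      linarith [(hx (j + 1) (by omega) (by omega)).2]
    have hnp : lam j * x j ≤ 0 :=
      mul_nonpos_of_nonneg_of_nonpos (hlam j (by omega)).le hcon
    nlinarith

lemma strand_c_mono (hn : 1 ≤ n) (hlam : ∀ k ≤ n, 0 < lam k)
    (hr : 0 ≤ r) (hr' : 0 ≤ r') (hrr : r ≤ r')
    (hx : ∀ j, 1 ≤ j → j ≤ n → 0 ≤ x j ∧ x j ≤ 1)
    (hx' : ∀ j, 1 ≤ j → j ≤ n → 0 ≤ x' j ∧ x' j ≤ 1)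
    (hS : StrandEq n lam r x c) (hS' : StrandEq n lam r' x' c') : c ≤ c' := by
  by_contra hcon
  push_neg at hcon
  have hc'0 : 0 ≤ c' := strand_c_nonneg hn hlam hx' hS'
  have hc : 0 < c := lt_of_le_of_lt hc'0 hcon
  have hrpos : 0 < r := lt_of_lt_of_le hc (strand_c_le_r hn hr hx hS)
  have hr'pos : 0 < r' := lt_of_lt_of_le hrpos hrr
  have hc' : 0 < c' := by
    rcases eq_or_lt_of_le hc'0 with h | h
    · exfalso
      have hz := strand_zero hn hlam hx' hS' h.symm
      have h0 := hS'.1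
      rw [hz 1 le_rfl hn] at h0
      simp at h0
      linarith
    · exact h
  -- backward induction : x' j < x j
  have hlt : ∀ j, 1 ≤ j → j ≤ n → x' j < x j := by
    refine orfm_back_ind ?_ ?_
    · have h1 := hS.2.2
      have h2 := hS'.2.2
      have := hlam n le_rfl
      nlinarith
    · intro j h1 h2 hnext
      have e1 := hS.2.1 j h1 h2
      have e2 := hS'.2.1 j h1 h2
      by_contra hc2
      push_neg at hc2
      have hxj1 : x (j + 1) < 1 :=
        strand_lt_one hn hr hlam hx hS hc (j + 1) (by omega) (by omega)
      have hl := hlam j (by omega)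
      have hx'j : 0 ≤ x' j := (hx' j h1 (by omega)).1
      -- c = lam j * x j * (1 - x (j+1)) ≤ lam j * x' j * (1 - x (j+1))
      --   ≤ lam j * x' j * (1 - x' (j+1)) = c' < c
      nlinarith [mul_le_mul_of_nonneg_left hc2 hl.le,
        mul_le_mul_of_nonneg_left hnext.le (mul_nonneg hl.le hx'j)]
  have hx1 : x 1 < 1 := strand_lt_one hn hr hlam hx hS hc 1 le_rfl hn
  have hx1' := hlt 1 le_rfl hn
  have e1 := hS.1
  have e2 := hS'.1
  nlinarith

lemma strand_x_mono (hn : 1 ≤ n) (hlam : ∀ k ≤ n, 0 < lam k)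
    (hr : 0 ≤ r) (hr' : 0 ≤ r') (hrr : r ≤ r')
    (hx : ∀ j, 1 ≤ j → j ≤ n → 0 ≤ x j ∧ x j ≤ 1)
    (hx' : ∀ j, 1 ≤ j → j ≤ n → 0 ≤ x' j ∧ x' j ≤ 1)
    (hS : StrandEq n lam r x c) (hS' : StrandEq n lam r' x' c') :
    ∀ j, 1 ≤ j → j ≤ n → x j ≤ x' j := by
  have hcc := strand_c_mono hn hlam hr hr' hrr hx hx' hS hS'
  rcases eq_or_lt_of_le (strand_c_nonneg hn hlam hx hS) with h | hc
  · intro j h1 h2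
    rw [strand_zero hn hlam hx hS h.symm j h1 h2]
    exact (hx' j h1 h2).1
  · have hc' : 0 < c' := lt_of_lt_of_le hc hcc
    refine orfm_back_ind ?_ ?_
    · have h1 := hS.2.2
      have h2 := hS'.2.2
      have := hlam n le_rfl
      nlinarith
    · intro j h1 h2 hnext
      have e1 := hS.2.1 j h1 h2
      have e2 := hS'.2.1 j h1 h2
      by_contra hc2
      push_neg at hc2
      have hxj1 : x (j + 1) < 1 :=
        strand_lt_one hn hr hlam hx hS hc (j + 1) (by omega) (by omega)
      have hl := hlam j (by omega)
      have hx'j : 0 ≤ x' j := (hx' j h1 (by omega)).1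
      -- c' = lam j * x' j * (1 - x' (j+1)) ≤ lam j * x' j * (1 - x (j+1))
      --    < lam j * x j * (1 - x (j+1)) = c ≤ c'
      nlinarith [mul_le_mul_of_nonneg_left
          (show (1:ℝ) - x' (j + 1) ≤ 1 - x (j + 1) by linarith)
          (mul_nonneg hl.le hx'j),
        mul_lt_mul_of_pos_left
          (mul_lt_mul_of_pos_right hc2 (show (0:ℝ) < 1 - x (j + 1) by linarith)) hl]

lemma strand_x_strict (hn : 1 ≤ n) (hlam : ∀ k ≤ n, 0 < lam k)
    (hr : 0 ≤ r) (hr' : 0 ≤ r') (hrr : r < r')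
    (hx : ∀ j, 1 ≤ j → j ≤ n → 0 ≤ x j ∧ x j ≤ 1)
    (hx' : ∀ j, 1 ≤ j → j ≤ n → 0 ≤ x' j ∧ x' j ≤ 1)
    (hS : StrandEq n lam r x c) (hS' : StrandEq n lam r' x' c') :
    ∀ j, 1 ≤ j → j ≤ n → x j < x' j := by
  have hr'pos : 0 < r' := lt_of_le_of_lt hr hrr
  have hc'0 : 0 ≤ c' := strand_c_nonneg hn hlam hx' hS'
  have hc' : 0 < c' := by
    rcases eq_or_lt_of_le hc'0 with h | h
    · exfalso
      have hz := strand_zero hn hlam hx' hS' h.symm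
      have h0 := hS'.1
      rw [hz 1 le_rfl hn] at h0
      simp at h0
      linarith
    · exact h
  rcases eq_or_lt_of_le (strand_c_nonneg hn hlam hx hS) with h | hc
  · intro j h1 h2
    rw [strand_zero hn hlam hx hS h.symm j h1 h2]
    exact strand_pos hn hlam hx' hS' hc' j h1 h2
  · have hcc := strand_c_mono hn hlam hr hr' hrr.le hx hx' hS hS'
    have hccs : c < c' := by
      rcases eq_or_lt_of_le hcc with h | h
      · exfalso
        -- equal fluxes force equal profiles, contradicting r < r'
        have heqx : ∀ j, 1 ≤ j → j ≤ n → x j = x' j := by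
          refine orfm_back_ind ?_ ?_
          · have h1 := hS.2.2
            have h2 := hS'.2.2
            have := hlam n le_rfl
            have : lam n * x n = lam n * x' n := by rw [h1, h2, h]
            exact mul_left_cancel₀ (hlam n le_rfl).ne' this
          · intro j h1 h2 hnext
            have e1 := hS.2.1 j h1 h2
            have e2 := hS'.2.1 j h1 h2
            rw [← hnext] at e2
            have hxj1 : x (j + 1) < 1 :=
              strand_lt_one hn hr hlam hx hS hc (j + 1) (by omega) (by omega)
            have hl := hlam j (by omega)
            have : lam j * x j * (1 - x (j + 1)) = lam j * x' j * (1 - x (j + 1)) := by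
              rw [e1, e2, h]
            have h3 : lam j * x j = lam j * x' j :=
              mul_right_cancel₀ (show (0:ℝ) < 1 - x (j + 1) by linarith).ne' this
            exact mul_left_cancel₀ hl.ne' h3
        have hx1 : x 1 < 1 := strand_lt_one hn hr hlam hx hS hc 1 le_rfl hn
        have e1 := hS.1
        have e2 := hS'.1
        rw [← heqx 1 le_rfl hn] at e2
        nlinarith
      · exact h
    refine orfm_back_ind ?_ ?_
    · have h1 := hS.2.2
      have h2 := hS'.2.2
      have := hlam n le_rfl
      nlinarith
    · intro j h1 h2 hnext
      have e1 := hS.2.1 j h1 h2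
      have e2 := hS'.2.1 j h1 h2
      by_contra hc2
      push_neg at hc2
      have hxj1 : x' (j + 1) ≤ 1 := (hx' (j + 1) (by omega) (by omega)).2
      have hxpos : 0 < x j := strand_pos hn hlam hx hS hc j h1 (by omega)
      have hl := hlam j (by omega)
      -- c' = lam j * x' j * (1 - x' (j+1)) ≤ lam j * x j * (1 - x' (j+1))
      --    < lam j * x j * (1 - x (j+1)) = c < c'
      nlinarith [mul_le_mul_of_nonneg_right (mul_le_mul_of_nonneg_left hc2 hl.le)
          (show (0:ℝ) ≤ 1 - x' (j + 1) by linarith),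
        mul_lt_mul_of_pos_left
          (mul_lt_mul_of_pos_right hnext (show (0:ℝ) < lam j by linarith)) hl]

end Strand

lemma orfm_flow_const (S : ORFM) (st : ORFMState) (hs : S.isSteady st)
    {p : ℕ} (hp : p < S.M) {i : ℕ} (hi : i < S.s p) :
    ∀ k ≤ S.n p i, S.flow st p i k = S.flow st p i (S.n p i) := by
  set n := S.n p i with hn
  have key : ∀ d ≤ n, S.flow st p i (n - d) = S.flow st p i n := by
    intro d
    induction d with
    | zero => simp
    | succ d ih =>
      intro hd
      have h1 := ih (by omega)
      have hfx := hs.1 p hp i hi (n - d) (by omega) (by omega)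
      rw [ORFM.fx] at hfx
      have e : n - (d + 1) = n - d - 1 := by omega
      rw [e]
      linarith
  intro k hk
  have := key (n - k) (by omega)
  rwa [show n - (n - k) = k by omega] at this

lemma orfm_steady_strand (S : ORFM) (st : ORFMState) (hs : S.isSteady st)
    {p : ℕ} (hp : p < S.M) {i : ℕ} (hi : i < S.s p) :
    StrandEq (S.n p i) (S.lam p i) (S.lam p i 0 * S.G p i (st.z p)) (st.x p i)
      (S.lam p i (S.n p i) * st.x p i (S.n p i)) := by
  have hfc := orfm_flow_const S st hs hp hi
  have hn1 : 1 ≤ S.n p i := S.hn p hp i hi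
  have hflown : S.flow st p i (S.n p i) = S.lam p i (S.n p i) * st.x p i (S.n p i) := by
    rw [ORFM.flow]
    simp [Nat.one_le_iff_ne_zero.mp hn1]
  refine ⟨?_, ?_, ?_⟩
  · have h0 := hfc 0 (by omega)
    rw [ORFM.flow, if_pos rfl, hflown] at h0
    exact h0
  · intro j h1 h2
    have := hfc j (by omega)
    rw [ORFM.flow] at this
    simp only [if_neg (by omega : j ≠ 0), if_neg (by omega : j ≠ S.n p i)] at this
    rw [hflown] at this
    exact this
  · rfl

lemma orfm_steady_pool (S : ORFM) (st : ORFMState) (hs : S.isSteady st)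
    {p : ℕ} (hp : p < S.M) : S.km p * st.z p = S.kp p * st.zE := by
  have hfz := hs.2.1 p hp
  rw [ORFM.fz] at hfz
  have hsum : ∑ i ∈ Finset.range (S.s p), (S.m p i : ℝ) * S.flow st p i (S.n p i)
      = ∑ i ∈ Finset.range (S.s p), (S.m p i : ℝ) * S.flow st p i 0 := by
    refine Finset.sum_congr rfl ?_
    intro i hi
    rw [orfm_flow_const S st hs hp (Finset.mem_range.mp hi) 0 (by omega)]
  rw [hsum] at hfz
  linarith

lemma orfm_G_nonneg (S : ORFM) (st : ORFMState) (hΩ : S.inOmega st)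
    {p : ℕ} (hp : p < S.M) {i : ℕ} (hi : i < S.s p) :
    0 ≤ S.G p i (st.z p) := by
  have hz := hΩ.2.2 p hp
  rcases eq_or_lt_of_le hz with h | h
  · rw [← h, S.hG_zero p hp i hi]
  · have := S.hG_mono p hp i hi (Set.mem_Ici.mpr le_rfl) (Set.mem_Ici.mpr hz) h
    rw [S.hG_zero p hp i hi] at this
    exact this.le

lemma orfm_zE_pos (S : ORFM) (st : ORFMState) (hΩ : S.inOmega st)
    (hs : S.isSteady st) (hpos : 0 < S.NrOf st) : 0 < st.zE := by
  rcases eq_or_lt_of_le hΩ.2.1 with h | h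
  · exfalso
    have hz : ∀ p < S.M, st.z p = 0 := by
      intro p hp
      have := orfm_steady_pool S st hs hp
      rw [← h] at this
      have hkm := S.hkm p hp
      nlinarith
    have hx : ∀ p < S.M, ∀ i < S.s p, ∀ j, 1 ≤ j → j ≤ S.n p i → st.x p i j = 0 := by
      intro p hp i hi
      have hse := orfm_steady_strand S st hs hp hi
      have hn1 := S.hn p hp i hi
      have hlam : ∀ k ≤ S.n p i, 0 < S.lam p i k := fun k hk => S.hlam p hp i hi k hk
      have hxm : ∀ j, 1 ≤ j → j ≤ S.n p i → 0 ≤ st.x p i j ∧ st.x p i j ≤ 1 := by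
        intro j h1 h2
        exact hΩ.1 p hp i hi j h1 h2
      have hr0 : S.lam p i 0 * S.G p i (st.z p) = 0 := by
        rw [hz p hp, S.hG_zero p hp i hi, mul_zero]
      have hcle := strand_c_le_r hn1 (le_of_eq hr0.symm) hxm hse
      have hcge := strand_c_nonneg hn1 hlam hxm hse
      rw [hr0] at hcle
      exact strand_zero hn1 hlam hxm hse (le_antisymm hcle hcge)
    rw [ORFM.NrOf] at hpos
    have h1 : ∑ p ∈ Finset.range S.M, st.z p = 0 := by
      refine Finset.sum_eq_zero ?_
      intro p hp
      exact hz p (Finset.mem_range.mp hp)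
    have h2 : ∑ p ∈ Finset.range S.M, ∑ i ∈ Finset.range (S.s p),
        (S.m p i : ℝ) * ∑ j ∈ Finset.Icc 1 (S.n p i), st.x p i j = 0 := by
      refine Finset.sum_eq_zero ?_
      intro p hp
      refine Finset.sum_eq_zero ?_
      intro i hi
      have : ∑ j ∈ Finset.Icc 1 (S.n p i), st.x p i j = 0 := by
        refine Finset.sum_eq_zero ?_
        intro j hj
        rw [Finset.mem_Icc] at hj
        exact hx p (Finset.mem_range.mp hp) i (Finset.mem_range.mp hi) j hj.1 hj.2
      rw [this, mul_zero]
    rw [← h, h1, h2] at hpos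
    norm_num at hpos
  · exact h

/-- Consider two ORFMs sharing the same species count and
strand data `(s, n, m, λ, G)`, whose binding rates agree for every species
except one distinguished species `q`, for which the ratio `K_q = k_q⁺/k_q⁻`
is strictly larger in the second system. Let `(x_e, z_e)` and `(x'_e, z'_e)`
be the unique steady states of the two systems on the common stoichiometric
class `N_r > 0`. Then the pool and all codon occupancies of species `q`
strictly increase, while the empty pool, and the pools and codon occupancies
of every other species, strictly decrease. -/
theorem orfm_steady_state_monotone_in_Kq (S S' : ORFM)
    (hMeq : S'.M = S.M) (hseq : S'.s = S.s) (hneq : S'.n = S.n)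
    (hmeq : S'.m = S.m) (hlameq : S'.lam = S.lam) (hGeq : S'.G = S.G)
    (q : ℕ) (hq : q < S.M)
    (hkeq : ∀ p < S.M, p ≠ q → S'.kp p = S.kp p ∧ S'.km p = S.km p)
    (hK : S.kp q / S.km q < S'.kp q / S'.km q)
    (Nr : ℝ) (hNr : 0 < Nr)
    (ste ste' : ORFMState)
    (hΩe : S.inOmega ste) (hNe : S.NrOf ste = Nr) (hse : S.isSteady ste)
    (hΩe' : S'.inOmega ste') (hNe' : S'.NrOf ste' = Nr) (hse' : S'.isSteady ste') :
    ste.z q < ste'.z q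
      ∧ (∀ i < S.s q, ∀ j, 1 ≤ j → j ≤ S.n q i → ste.x q i j < ste'.x q i j)
      ∧ ste'.zE < ste.zE
      ∧ ∀ p < S.M, p ≠ q →
          ste'.z p < ste.z p
            ∧ ∀ i < S.s p, ∀ j, 1 ≤ j → j ≤ S.n p i → ste'.x p i j < ste.x p i j := by
  have hq' : q < S'.M := by rw [hMeq]; exact hq
  -- pool balance equations
  have hzeq : ∀ p, p < S.M → S.km p * ste.z p = S.kp p * ste.zE :=
    fun p hp => orfm_steady_pool S ste hse hp
  have hzeq' : ∀ p, p < S.M → S'.km p * ste'.z p = S'.kp p * ste'.zE :=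
    fun p hp => orfm_steady_pool S' ste' hse' (by rw [hMeq]; exact hp)
  -- positivity of empty pool
  have hzE : 0 < ste.zE := orfm_zE_pos S ste hΩe hse (by rw [hNe]; exact hNr)
  have hzE' : 0 < ste'.zE := orfm_zE_pos S' ste' hΩe' hse' (by rw [hNe']; exact hNr)
  -- Nr of primed state expressed through S
  have hNe2 : S.NrOf ste' = Nr := by
    rw [← hNe']
    simp only [ORFM.NrOf, hMeq, hseq, hneq, hmeq]
  -- strand steady-state equations
  have hstr : ∀ p, ∀ _ : p < S.M, ∀ i, ∀ _ : i < S.s p,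
      StrandEq (S.n p i) (S.lam p i) (S.lam p i 0 * S.G p i (ste.z p)) (ste.x p i)
        (S.lam p i (S.n p i) * ste.x p i (S.n p i)) :=
    fun p hp i hi => orfm_steady_strand S ste hse hp hi
  have hstr' : ∀ p, ∀ _ : p < S.M, ∀ i, ∀ _ : i < S.s p,
      StrandEq (S.n p i) (S.lam p i) (S.lam p i 0 * S.G p i (ste'.z p)) (ste'.x p i)
        (S.lam p i (S.n p i) * ste'.x p i (S.n p i)) := by
    intro p hp i hi
    have h := orfm_steady_strand S' ste' hse' (by rw [hMeq]; exact hp)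
      (by rw [hseq]; exact hi)
    rw [hneq, hlameq, hGeq] at h
    exact h
  -- bounds on codon occupancies
  have hxb : ∀ p, ∀ _ : p < S.M, ∀ i, ∀ _ : i < S.s p, ∀ j, 1 ≤ j → j ≤ S.n p i →
      0 ≤ ste.x p i j ∧ ste.x p i j ≤ 1 := by
    intro p hp i hi j h1 h2
    have := hΩe.1 p hp i hi j h1 h2
    exact ⟨this.1, this.2⟩
  have hxb' : ∀ p, ∀ _ : p < S.M, ∀ i, ∀ _ : i < S.s p, ∀ j, 1 ≤ j → j ≤ S.n p i →
      0 ≤ ste'.x p i j ∧ ste'.x p i j ≤ 1 := by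
    intro p hp i hi j h1 h2
    have := hΩe'.1 p (by rw [hMeq]; exact hp) i (by rw [hseq]; exact hi) j h1
      (by rw [hneq]; exact h2)
    exact ⟨this.1, this.2⟩
  -- nonnegativity of pools
  have hznn : ∀ p, p < S.M → 0 ≤ ste.z p := fun p hp => hΩe.2.2 p hp
  have hznn' : ∀ p, p < S.M → 0 ≤ ste'.z p :=
    fun p hp => hΩe'.2.2 p (by rw [hMeq]; exact hp)
  -- nonnegativity of effective initiation rates
  have hrn : ∀ p, ∀ _ : p < S.M, ∀ i, ∀ _ : i < S.s p,
      0 ≤ S.lam p i 0 * S.G p i (ste.z p) :=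
    fun p hp i hi => mul_nonneg (S.hlam p hp i hi 0 (Nat.zero_le _)).le
      (orfm_G_nonneg S ste hΩe hp hi)
  have hrn' : ∀ p, ∀ _ : p < S.M, ∀ i, ∀ _ : i < S.s p,
      0 ≤ S.lam p i 0 * S.G p i (ste'.z p) := by
    intro p hp i hi
    have := orfm_G_nonneg S' ste' hΩe' (p := p) (by rw [hMeq]; exact hp)
      (i := i) (by rw [hseq]; exact hi)
    rw [hGeq] at this
    exact mul_nonneg (S.hlam p hp i hi 0 (Nat.zero_le _)).le this
  -- monotonicity of the effective initiation rate
  have hGcomp : ∀ p, ∀ _ : p < S.M, ∀ i, ∀ _ : i < S.s p, ∀ a b : ℝ, 0 ≤ a → 0 ≤ b →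
      (a ≤ b → S.lam p i 0 * S.G p i a ≤ S.lam p i 0 * S.G p i b)
        ∧ (a < b → S.lam p i 0 * S.G p i a < S.lam p i 0 * S.G p i b) := by
    intro p hp i hi a b ha hb
    have hl0 := S.hlam p hp i hi 0 (Nat.zero_le _)
    constructor
    · intro hab
      rcases eq_or_lt_of_le hab with h | h
      · rw [h]
      · exact (mul_le_mul_of_nonneg_left
          (S.hG_mono p hp i hi (Set.mem_Ici.mpr ha) (Set.mem_Ici.mpr hb) h).le hl0.le)
    · intro hab
      exact mul_lt_mul_of_pos_left
        (S.hG_mono p hp i hi (Set.mem_Ici.mpr ha) (Set.mem_Ici.mpr hb) hab) hl0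
  -- weak and strict codon comparisons from pool comparisons
  have wxAB : ∀ p, ∀ _ : p < S.M, ste.z p ≤ ste'.z p → ∀ i, ∀ _ : i < S.s p,
      ∀ j, 1 ≤ j → j ≤ S.n p i → ste.x p i j ≤ ste'.x p i j := by
    intro p hp hz i hi j h1 h2
    exact strand_x_mono (S.hn p hp i hi) (fun k hk => S.hlam p hp i hi k hk)
      (hrn p hp i hi) (hrn' p hp i hi)
      ((hGcomp p hp i hi _ _ (hznn p hp) (hznn' p hp)).1 hz)
      (hxb p hp i hi) (hxb' p hp i hi) (hstr p hp i hi) (hstr' p hp i hi) j h1 h2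
  have wxBA : ∀ p, ∀ _ : p < S.M, ste'.z p ≤ ste.z p → ∀ i, ∀ _ : i < S.s p,
      ∀ j, 1 ≤ j → j ≤ S.n p i → ste'.x p i j ≤ ste.x p i j := by
    intro p hp hz i hi j h1 h2
    exact strand_x_mono (S.hn p hp i hi) (fun k hk => S.hlam p hp i hi k hk)
      (hrn' p hp i hi) (hrn p hp i hi)
      ((hGcomp p hp i hi _ _ (hznn' p hp) (hznn p hp)).1 hz)
      (hxb' p hp i hi) (hxb p hp i hi) (hstr' p hp i hi) (hstr p hp i hi) j h1 h2
  have sxAB : ∀ p, ∀ _ : p < S.M, ste.z p < ste'.z p → ∀ i, ∀ _ : i < S.s p,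
      ∀ j, 1 ≤ j → j ≤ S.n p i → ste.x p i j < ste'.x p i j := by
    intro p hp hz i hi j h1 h2
    exact strand_x_strict (S.hn p hp i hi) (fun k hk => S.hlam p hp i hi k hk)
      (hrn p hp i hi) (hrn' p hp i hi)
      ((hGcomp p hp i hi _ _ (hznn p hp) (hznn' p hp)).2 hz)
      (hxb p hp i hi) (hxb' p hp i hi) (hstr p hp i hi) (hstr' p hp i hi) j h1 h2
  have sxBA : ∀ p, ∀ _ : p < S.M, ste'.z p < ste.z p → ∀ i, ∀ _ : i < S.s p,
      ∀ j, 1 ≤ j → j ≤ S.n p i → ste'.x p i j < ste.x p i j := by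
    intro p hp hz i hi j h1 h2
    exact strand_x_strict (S.hn p hp i hi) (fun k hk => S.hlam p hp i hi k hk)
      (hrn' p hp i hi) (hrn p hp i hi)
      ((hGcomp p hp i hi _ _ (hznn' p hp) (hznn p hp)).2 hz)
      (hxb' p hp i hi) (hxb p hp i hi) (hstr' p hp i hi) (hstr p hp i hi) j h1 h2
  -- pool comparisons for p ≠ q from the empty-pool comparison
  have hz_le : ∀ p, ∀ _ : p < S.M, p ≠ q → ste.zE ≤ ste'.zE → ste.z p ≤ ste'.z p := by
    intro p hp hpq hle
    have h1 := hzeq p hp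
    have h2 := hzeq' p hp
    rw [(hkeq p hp hpq).1, (hkeq p hp hpq).2] at h2
    by_contra hcon
    push_neg at hcon
    nlinarith [S.hkm p hp, S.hkp p hp,
      mul_le_mul_of_nonneg_left hle (S.hkp p hp).le,
      mul_lt_mul_of_pos_left hcon (S.hkm p hp)]
  have hz_lt : ∀ p, ∀ _ : p < S.M, p ≠ q → ste'.zE < ste.zE → ste'.z p < ste.z p := by
    intro p hp hpq hlt
    have h1 := hzeq p hp
    have h2 := hzeq' p hp
    rw [(hkeq p hp hpq).1, (hkeq p hp hpq).2] at h2
    by_contra hcon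
    push_neg at hcon
    nlinarith [S.hkm p hp, S.hkp p hp,
      mul_le_mul_of_nonneg_left hcon (S.hkm p hp).le,
      mul_lt_mul_of_pos_left hlt (S.hkp p hp)]
  -- expressions for z q
  have ezq : ste.z q = S.kp q / S.km q * ste.zE := by
    rw [div_mul_eq_mul_div, eq_div_iff (S.hkm q hq).ne']
    linarith [hzeq q hq]
  have ezq' : ste'.z q = S'.kp q / S'.km q * ste'.zE := by
    rw [div_mul_eq_mul_div, eq_div_iff (S'.hkm q hq').ne']
    linarith [hzeq' q hq]
  have hK'nn : 0 ≤ S'.kp q / S'.km q :=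
    div_nonneg (S'.hkp q hq').le (S'.hkm q hq').le
  -- Claim 1 : ¬ (ste.zE ≤ ste'.zE)
  have claim1 : ¬ ste.zE ≤ ste'.zE := by
    intro hle
    have hzq : ste.z q < ste'.z q := by
      rw [ezq, ezq']
      calc S.kp q / S.km q * ste.zE < S'.kp q / S'.km q * ste.zE :=
            mul_lt_mul_of_pos_right hK hzE
        _ ≤ S'.kp q / S'.km q * ste'.zE := mul_le_mul_of_nonneg_left hle hK'nn
    have hzall : ∀ p, p < S.M → ste.z p ≤ ste'.z p := by
      intro p hp
      by_cases hpq : p = q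
      · subst hpq; exact hzq.le
      · exact hz_le p hp hpq hle
    have hsumz : ∑ p ∈ Finset.range S.M, ste.z p < ∑ p ∈ Finset.range S.M, ste'.z p := by
      refine Finset.sum_lt_sum (fun p hp => hzall p (Finset.mem_range.mp hp))
        ⟨q, Finset.mem_range.mpr hq, hzq⟩
    have hsumx : ∑ p ∈ Finset.range S.M, ∑ i ∈ Finset.range (S.s p),
          (S.m p i : ℝ) * ∑ j ∈ Finset.Icc 1 (S.n p i), ste.x p i j
        ≤ ∑ p ∈ Finset.range S.M, ∑ i ∈ Finset.range (S.s p),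
          (S.m p i : ℝ) * ∑ j ∈ Finset.Icc 1 (S.n p i), ste'.x p i j := by
      refine Finset.sum_le_sum ?_
      intro p hp
      refine Finset.sum_le_sum ?_
      intro i hi
      refine mul_le_mul_of_nonneg_left ?_ (Nat.cast_nonneg _)
      refine Finset.sum_le_sum ?_
      intro j hj
      rw [Finset.mem_Icc] at hj
      exact wxAB p (Finset.mem_range.mp hp) (hzall p (Finset.mem_range.mp hp))
        i (Finset.mem_range.mp hi) j hj.1 hj.2
    have : S.NrOf ste < S.NrOf ste' := by
      rw [ORFM.NrOf, ORFM.NrOf]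
      linarith
    rw [hNe, hNe2] at this
    exact lt_irrefl _ this
  push_neg at claim1
  -- Claim 2 : ¬ (ste'.z q ≤ ste.z q)
  have claim2 : ¬ ste'.z q ≤ ste.z q := by
    intro hle
    have hzall : ∀ p, p < S.M → ste'.z p ≤ ste.z p := by
      intro p hp
      by_cases hpq : p = q
      · subst hpq; exact hle
      · exact (hz_lt p hp hpq claim1).le
    have hsumz : ∑ p ∈ Finset.range S.M, ste'.z p ≤ ∑ p ∈ Finset.range S.M, ste.z p :=
      Finset.sum_le_sum (fun p hp => hzall p (Finset.mem_range.mp hp))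
    have hsumx : ∑ p ∈ Finset.range S.M, ∑ i ∈ Finset.range (S.s p),
          (S.m p i : ℝ) * ∑ j ∈ Finset.Icc 1 (S.n p i), ste'.x p i j
        ≤ ∑ p ∈ Finset.range S.M, ∑ i ∈ Finset.range (S.s p),
          (S.m p i : ℝ) * ∑ j ∈ Finset.Icc 1 (S.n p i), ste.x p i j := by
      refine Finset.sum_le_sum ?_
      intro p hp
      refine Finset.sum_le_sum ?_
      intro i hi
      refine mul_le_mul_of_nonneg_left ?_ (Nat.cast_nonneg _)
      refine Finset.sum_le_sum ?_
      intro j hj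
      rw [Finset.mem_Icc] at hj
      exact wxBA p (Finset.mem_range.mp hp) (hzall p (Finset.mem_range.mp hp))
        i (Finset.mem_range.mp hi) j hj.1 hj.2
    have : S.NrOf ste' < S.NrOf ste := by
      rw [ORFM.NrOf, ORFM.NrOf]
      linarith
    rw [hNe, hNe2] at this
    exact lt_irrefl _ this
  push_neg at claim2
  refine ⟨claim2, ?_, claim1, ?_⟩
  · intro i hi j h1 h2
    exact sxAB q hq claim2 i hi j h1 h2
  · intro p hp hpq
    have hzp := hz_lt p hp hpq claim1
    exact ⟨hzp, fun i hi j h1 h2 => sxBA p hp hzp i hi j h1 h2⟩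
end
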